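/- arXiv:2102.00652 — 7 statements merged into one kernel-verified Lean document; each statement's English description precedes it below -/
import Mathlib

section
/- Let E ⊆ X be a subset of a Banach space X. If there exists a compact set Q ⊆ X such that the interior of (closed convex hull of E) + Q is nonempty, then for any e in the closed convex hull of E, the closed linear span of E − e is a finite codimensional subspace of X. -/
open Pointwise

/-- If `E ⊆ X` and there is a compact set `Q ⊆ X` such that the interior of
`co̅(E) + Q` is nonempty, then for every `e ∈ co̅(E)` the closed linear span of `E - e`
is a finite codimensional subspace of `X`. -/
theorem stmt_1 {X : Type*} [NormedAddCommGroup X] [NormedSpace ℝ X] [CompleteSpace X]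
    (E Q : Set X) (hQ : IsCompact Q)
    (hint : (interior (closure (convexHull ℝ E) + Q)).Nonempty) :
    ∀ e ∈ closure (convexHull ℝ E),
      ∃ (m : ℕ) (x : Fin m → X),
        (Submodule.span ℝ (((fun y => y - e) '' E) ∪ Set.range x)).topologicalClosure = ⊤ := by
  intro e he
  set S : Set X := (fun y => y - e) '' E with hSdef
  set Y : Submodule ℝ X := (Submodule.span ℝ S).topologicalClosure with hYdef
  have hYc : IsClosed (Y : Set X) := Submodule.isClosed_topologicalClosure _
  -- closure of convex hull lies in e + Y
  have hsub : closure (convexHull ℝ E) ⊆ {z | z - e ∈ Y} := by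
    apply closure_minimal
    · apply convexHull_min
      · intro y hy
        exact Submodule.le_topologicalClosure _ (Submodule.subset_span ⟨y, hy, rfl⟩)
      · intro a ha b hb s t hs ht hst
        simp only [Set.mem_setOf_eq] at *
        have h1 : s • (a - e) + t • (b - e) = s • a + t • b - e := by
          rw [smul_sub, smul_sub, sub_add_sub_comm, ← add_smul, hst, one_smul]
        rw [← h1]
        exact Y.add_mem (Y.smul_mem _ ha) (Y.smul_mem _ hb)
    · exact hYc.preimage (continuous_sub_right e)
  -- move to a compact set Q' with Y + Q' having nonempty interior
  set Q' : Set X := (fun q => e + q) '' Q with hQ'def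
  have hQ'c : IsCompact Q' := hQ.image (continuous_const.add continuous_id)
  have hsub2 : closure (convexHull ℝ E) + Q ⊆ (Y : Set X) + Q' := by
    rintro z ⟨k, hk, q, hq, rfl⟩
    exact ⟨k - e, hsub hk, e + q, ⟨q, hq, rfl⟩, by abel⟩
  obtain ⟨z, hz⟩ := hint
  have hz' : z ∈ interior ((Y : Set X) + Q') := interior_mono hsub2 hz
  -- pass to the quotient
  haveI : IsClosed (Y : Set X) := hYc
  set π := Y.mkQ with hπdef
  have hπopen : IsOpenMap π := Submodule.isOpenMap_mkQ Y
  have hπcont : Continuous π := (Submodule.isOpenQuotientMap_mkQ Y).continuous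
  have himg : π '' ((Y : Set X) + Q') ⊆ π '' Q' := by
    rintro w ⟨v, ⟨y, hy, q, hq, rfl⟩, rfl⟩
    refine ⟨q, hq, ?_⟩
    have hy0 : π y = 0 := (Submodule.Quotient.mk_eq_zero Y).2 hy
    rw [map_add, hy0, zero_add]
  have hKc : IsCompact (π '' Q') := hQ'c.image hπcont
  have hKint : (interior (π '' Q')).Nonempty := by
    refine ⟨π z, ?_⟩
    apply interior_maximal (himg.trans' (Set.image_mono (f := π) interior_subset))
      (hπopen _ isOpen_interior)
    exact ⟨z, hz', rfl⟩
  -- find a compact closed ball in the quotient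
  obtain ⟨c, hc⟩ := hKint
  obtain ⟨ε, hε, hball⟩ := Metric.isOpen_iff.1 isOpen_interior c hc
  have hcb : IsCompact (Metric.closedBall c (ε / 2)) := by
    refine hKc.of_isClosed_subset Metric.isClosed_closedBall ?_
    refine (Metric.closedBall_subset_ball (by linarith)).trans
      (hball.trans interior_subset)
  haveI : FiniteDimensional ℝ (X ⧸ Y) :=
    FiniteDimensional.of_isCompact_closedBall ℝ (by linarith) hcb
  -- choose lifts of a basis of the quotient
  set m := Module.finrank ℝ (X ⧸ Y) with hm
  set b := Module.finBasis ℝ (X ⧸ Y) with hb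
  set x : Fin m → X := fun i => (Submodule.Quotient.mk_surjective Y (b i)).choose with hx
  have hxb : ∀ i, π (x i) = b i := fun i =>
    (Submodule.Quotient.mk_surjective Y (b i)).choose_spec
  refine ⟨m, x, ?_⟩
  set Z : Submodule ℝ X := (Submodule.span ℝ (S ∪ Set.range x)).topologicalClosure with hZ
  have hYZ : Y ≤ Z :=
    Submodule.topologicalClosure_mono (Submodule.span_mono Set.subset_union_left)
  have hxZ : Submodule.span ℝ (Set.range x) ≤ Z := by
    exact le_trans (Submodule.span_mono (Set.subset_union_right (s := S)))
      (Submodule.le_topologicalClosure _)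
  rw [eq_top_iff]
  intro v _
  have hmap : Submodule.map π (Submodule.span ℝ (Set.range x)) = ⊤ := by
    rw [Submodule.map_span, ← Set.range_comp]
    have : (π ∘ x) = fun i => b i := funext hxb
    rw [this]
    exact b.span_eq
  have hv : π v ∈ Submodule.map π (Submodule.span ℝ (Set.range x)) := by
    rw [hmap]; trivial
  obtain ⟨w, hw, hwv⟩ := hv
  have hvw : v - w ∈ Y := by
    have : π (v - w) = 0 := by rw [map_sub, hwv, sub_self]
    exact (Submodule.Quotient.mk_eq_zero Y).1 this
  have : v = (v - w) + w := by abel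
  rw [this]
  exact Z.add_mem (hYZ hvw) (hxZ hw)
end

section
/- Let Q be a finite codimensional subset of a Banach space X, Λ ∈ X', and (Λₖ)ₖ ⊆ X' a sequence with |Λₖ|_{X'} ≥ δ > 0 for all k, Λₖ → Λ weakly* in X', and ⟨Λₖ, x⟩ ≥ −εₖ for all x ∈ Q and all k, where εₖ ≥ 0 and εₖ → 0. Then Λ ≠ 0. -/
open Pointwise Filter

/-- A subset `D` of a normed space `X` is finite codimensional in `X` if there is
`x₀ ∈ co̅(D)` such that the closed span of `D - x₀` is a finite codimensional subspace of `X`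
and `co̅(D - x₀)` has an interior point in this subspace. -/
def FinCodimSet {X : Type*} [NormedAddCommGroup X] [NormedSpace ℝ X] (D : Set X) : Prop :=
  ∃ x₀ ∈ closure (convexHull ℝ D),
    (∃ (m : ℕ) (v : Fin m → X),
        (Submodule.span ℝ (((fun y => y - x₀) '' D) ∪ Set.range v)).topologicalClosure = ⊤) ∧
    (interior
      (((↑) : (Submodule.span ℝ ((fun y => y - x₀) '' D)).topologicalClosure → X) ⁻¹'
        (closure (convexHull ℝ ((fun y => y - x₀) '' D))))).Nonempty

/-- On a finite dimensional space, pointwise convergence to `0` of functionals implies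
convergence in operator norm. -/
lemma aux_opNorm_tendsto {E : Type*} [NormedAddCommGroup E] [NormedSpace ℝ E]
    [FiniteDimensional ℝ E] (φ : ℕ → E →L[ℝ] ℝ)
    (hφ : ∀ x : E, Tendsto (fun k => φ k x) atTop (nhds 0)) :
    Tendsto (fun k => ‖φ k‖) atTop (nhds 0) := by
  classical
  set b := Module.finBasis ℝ E with hb
  set Ci : Fin (Module.finrank ℝ E) → ℝ :=
    fun i => ‖LinearMap.toContinuousLinearMap (b.coord i)‖ with hCi
  have key : ∀ k, ‖φ k‖ ≤ ∑ i, Ci i * |φ k (b i)| := by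
    intro k
    apply ContinuousLinearMap.opNorm_le_bound
    · exact Finset.sum_nonneg fun i _ => mul_nonneg (norm_nonneg _) (abs_nonneg _)
    intro x
    have hrepr : x = ∑ i, b.repr x i • b i := (b.sum_repr x).symm
    calc ‖φ k x‖ = |∑ i, b.repr x i * φ k (b i)| := by
          conv_lhs => rw [hrepr]
          rw [map_sum, Real.norm_eq_abs]
          simp [map_smul, smul_eq_mul]
      _ ≤ ∑ i, |b.repr x i * φ k (b i)| := Finset.abs_sum_le_sum_abs _ _
      _ ≤ ∑ i, (Ci i * ‖x‖) * |φ k (b i)| := by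
          apply Finset.sum_le_sum
          intro i _
          rw [abs_mul]
          apply mul_le_mul_of_nonneg_right _ (abs_nonneg _)
          have h := (LinearMap.toContinuousLinearMap (b.coord i)).le_opNorm x
          simpa [Real.norm_eq_abs] using h
      _ = (∑ i, Ci i * |φ k (b i)|) * ‖x‖ := by
          rw [Finset.sum_mul]; congr 1; ext i; ring
  have hsum : Tendsto (fun k => ∑ i, Ci i * |φ k (b i)|) atTop (nhds 0) := by
    have h : Tendsto (fun k => ∑ i, Ci i * |φ k (b i)|) atTop
        (nhds (∑ _i : Fin (Module.finrank ℝ E), (0 : ℝ))) := by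
      apply tendsto_finset_sum
      intro i _
      simpa using (hφ (b i)).abs.const_mul (Ci i)
    simpa using h
  exact squeeze_zero (fun k => norm_nonneg _) key hsum

/-- If a set together with finitely many vectors has dense span, then the closed span of the
set admits a finite dimensional complement. -/
lemma aux_complement {X : Type*} [NormedAddCommGroup X] [NormedSpace ℝ X] [CompleteSpace X]
    (s : Set X) {m : ℕ} (v : Fin m → X)
    (hspan : (Submodule.span ℝ (s ∪ Set.range v)).topologicalClosure = ⊤) :
    ∃ G : Submodule ℝ X, FiniteDimensional ℝ G ∧
      (Submodule.span ℝ s).topologicalClosure ⊔ G = ⊤ := by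
  set Y : Submodule ℝ X := (Submodule.span ℝ s).topologicalClosure with hY
  have hYclosed : IsClosed (Y : Set X) := Submodule.isClosed_topologicalClosure _
  haveI : IsClosed (Y : Set X) := hYclosed
  set W : Submodule ℝ (X ⧸ Y) := Submodule.span ℝ (Set.range fun i => Y.mkQ (v i)) with hW
  haveI hWfin : FiniteDimensional ℝ W := FiniteDimensional.span_of_finite ℝ (Set.finite_range _)
  have hWclosed : IsClosed (W : Set (X ⧸ Y)) := W.closed_of_finiteDimensional
  have hmaple : Submodule.map Y.mkQ (Submodule.span ℝ (s ∪ Set.range v)) ≤ W := by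
    rw [Submodule.map_span]
    apply Submodule.span_le.2
    rintro _ ⟨x, hx | hx, rfl⟩
    · have hxY : x ∈ Y := Submodule.le_topologicalClosure _ (Submodule.subset_span hx)
      have h0 : Y.mkQ x = 0 := (Submodule.Quotient.mk_eq_zero Y).2 hxY
      rw [h0]; exact W.zero_mem
    · rcases hx with ⟨i, rfl⟩
      exact Submodule.subset_span ⟨i, rfl⟩
  have hWtop : W = ⊤ := by
    rw [eq_top_iff]
    intro z _
    obtain ⟨x, rfl⟩ := Submodule.mkQ_surjective Y z
    have hdense : closure ((Submodule.span ℝ (s ∪ Set.range v) : Set X)) = Set.univ := by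
      have h := congrArg (fun p : Submodule ℝ X => (p : Set X)) hspan
      simpa [← Submodule.topologicalClosure_coe] using h
    have hx : x ∈ closure ((Submodule.span ℝ (s ∪ Set.range v) : Set X)) := by
      rw [hdense]; trivial
    have himg : Y.mkQ x ∈ closure (Y.mkQ '' (Submodule.span ℝ (s ∪ Set.range v) : Set X)) :=
      image_closure_subset_closure_image Y.isOpenQuotientMap_mkQ.continuous
        (Set.mem_image_of_mem _ hx)
    have hsubW : Y.mkQ '' (Submodule.span ℝ (s ∪ Set.range v) : Set X) ⊆ (W : Set (X ⧸ Y)) := by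
      rintro _ ⟨x', hx', rfl⟩
      exact hmaple (Submodule.mem_map_of_mem hx')
    exact hWclosed.closure_subset ((closure_mono hsubW) himg)
  haveI : FiniteDimensional ℝ (X ⧸ Y) := by
    haveI : FiniteDimensional ℝ (⊤ : Submodule ℝ (X ⧸ Y)) := hWtop ▸ hWfin
    exact (Submodule.topEquiv : (⊤ : Submodule ℝ (X ⧸ Y)) ≃ₗ[ℝ] (X ⧸ Y)).finiteDimensional
  obtain ⟨G, hG⟩ := Submodule.exists_isCompl Y
  haveI : FiniteDimensional ℝ G := (Y.quotientEquivOfIsCompl G hG).finiteDimensional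
  exact ⟨G, ‹_›, codisjoint_iff.1 hG.codisjoint⟩

set_option maxHeartbeats 1000000 in
set_option synthInstance.maxHeartbeats 1000000 in
/-- If `Q` is a finite codimensional subset of a Banach space `X`,
`‖Λₖ‖ ≥ δ > 0`, `Λₖ → Λ` weakly-*, and `⟨Λₖ, x⟩ ≥ -εₖ` for all `x ∈ Q` with `εₖ ≥ 0`,
`εₖ → 0`, then `Λ ≠ 0`. -/
theorem stmt_2 {X : Type*} [NormedAddCommGroup X] [NormedSpace ℝ X] [CompleteSpace X]
    (Q : Set X) (hQ : FinCodimSet Q)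
    (Λ : X →L[ℝ] ℝ) (Λk : ℕ → X →L[ℝ] ℝ) (δ : ℝ) (hδ : 0 < δ)
    (hnorm : ∀ k, δ ≤ ‖Λk k‖)
    (hweak : ∀ x : X, Tendsto (fun k => Λk k x) atTop (nhds (Λ x)))
    (ε : ℕ → ℝ) (hε : ∀ k, 0 ≤ ε k) (hε0 : Tendsto ε atTop (nhds 0))
    (hineq : ∀ k, ∀ x ∈ Q, -(ε k) ≤ Λk k x) :
    Λ ≠ 0 := by
  obtain ⟨x₀, hx₀, ⟨m, v, hspan⟩, y₀, hy₀⟩ := hQ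
  intro hΛ0
  have hweak0 : ∀ x : X, Tendsto (fun k => Λk k x) atTop (nhds 0) := by
    intro x
    simpa [hΛ0] using hweak x
  -- Step 1: the inequality passes to the closed convex hull
  have hC : ∀ k, ∀ z ∈ closure (convexHull ℝ ((fun y => y - x₀) '' Q)),
      -(ε k) - Λk k x₀ ≤ Λk k z := by
    intro k
    have hconv : Convex ℝ {z : X | -(ε k) - Λk k x₀ ≤ Λk k z} :=
      convex_halfSpace_ge ⟨(Λk k).map_add, (Λk k).map_smul⟩ _
    have hclosed : IsClosed {z : X | -(ε k) - Λk k x₀ ≤ Λk k z} :=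
      isClosed_le continuous_const (Λk k).continuous
    have hsub : (fun y => y - x₀) '' Q ⊆ {z : X | -(ε k) - Λk k x₀ ≤ Λk k z} := by
      rintro _ ⟨q, hq, rfl⟩
      have := hineq k q hq
      simp only [Set.mem_setOf_eq, map_sub]
      linarith
    exact fun z hz => closure_minimal (convexHull_min hsub hconv) hclosed hz
  -- Step 2: interior point gives a ball
  obtain ⟨r, hr, hball⟩ := Metric.isOpen_iff.1 isOpen_interior y₀ hy₀
  have hmemC : ∀ y : (Submodule.span ℝ ((fun y => y - x₀) '' Q)).topologicalClosure,
      ‖y‖ < r → ((y₀ : X) + (y : X)) ∈ closure (convexHull ℝ ((fun y => y - x₀) '' Q)) := by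
    intro y hy
    have hmem : y₀ + y ∈ Metric.ball y₀ r := by
      rw [Metric.mem_ball, dist_eq_norm]
      simpa using hy
    have h2 := interior_subset (hball hmem)
    simpa using h2
  have ha_nonneg : ∀ k, 0 ≤ ε k + |Λk k x₀| + |Λk k (y₀ : X)| := fun k =>
    add_nonneg (add_nonneg (hε k) (abs_nonneg _)) (abs_nonneg _)
  have ha0 : Tendsto (fun k => ε k + |Λk k x₀| + |Λk k (y₀ : X)|) atTop (nhds 0) := by
    have := (hε0.add (hweak0 x₀).abs).add (hweak0 (y₀ : X)).abs
    simpa using this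
  have hsmall : ∀ k, ∀ y : (Submodule.span ℝ ((fun y => y - x₀) '' Q)).topologicalClosure,
      ‖y‖ < r → |Λk k (y : X)| ≤ ε k + |Λk k x₀| + |Λk k (y₀ : X)| := by
    intro k y hy
    have h1 := hC k _ (hmemC y hy)
    have h2 := hC k _ (hmemC (-y) (by simpa using hy))
    simp only [map_add, Submodule.coe_neg, map_neg] at h1 h2
    have e1 := le_abs_self (Λk k (y₀ : X))
    have e1' := neg_abs_le (Λk k (y₀ : X))
    have e2 := le_abs_self (Λk k x₀)
    have e2' := neg_abs_le (Λk k x₀)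
    rw [abs_le]
    constructor <;> linarith
  have hYbound : ∀ k, ∀ y : (Submodule.span ℝ ((fun y => y - x₀) '' Q)).topologicalClosure,
      |Λk k (y : X)| ≤ 2 / r * (ε k + |Λk k x₀| + |Λk k (y₀ : X)|) * ‖y‖ := by
    intro k y
    rcases eq_or_ne y 0 with rfl | hy
    · simp
    · have hny : 0 < ‖y‖ := norm_pos_iff.2 hy
      have hc0 : 0 < r / (2 * ‖y‖) := by positivity
      have hcmul : r / (2 * ‖y‖) * ‖y‖ = r / 2 := by
        rw [div_mul_eq_mul_div, mul_comm r ‖y‖, mul_comm 2 ‖y‖,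
          mul_div_mul_left r 2 (ne_of_gt hny)]
      have hcy : ‖(r / (2 * ‖y‖)) • y‖ < r := by
        rw [norm_smul, Real.norm_eq_abs, abs_of_pos hc0, hcmul]
        linarith
      have h := hsmall k ((r / (2 * ‖y‖)) • y) hcy
      have hcoe : (((r / (2 * ‖y‖)) • y :
          (Submodule.span ℝ ((fun y => y - x₀) '' Q)).topologicalClosure) : X)
          = (r / (2 * ‖y‖)) • (y : X) := rfl
      rw [hcoe, map_smul, smul_eq_mul, abs_mul, abs_of_pos hc0] at h
      have h2 : |Λk k (y : X)| ≤ (ε k + |Λk k x₀| + |Λk k (y₀ : X)|) / (r / (2 * ‖y‖)) :=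
        (le_div_iff₀ hc0).2 (by linarith [mul_comm (r / (2 * ‖y‖)) |Λk k (y : X)|])
      calc |Λk k (y : X)| ≤ (ε k + |Λk k x₀| + |Λk k (y₀ : X)|) / (r / (2 * ‖y‖)) := h2
        _ = 2 / r * (ε k + |Λk k x₀| + |Λk k (y₀ : X)|) * ‖y‖ := by
            rw [div_div_eq_mul_div]; ring
  -- Step 3: a finite dimensional complement
  obtain ⟨G, hGfin, hGsup⟩ := aux_complement ((fun y => y - x₀) '' Q) v hspan
  haveI : FiniteDimensional ℝ G := hGfin
  haveI : CompleteSpace ((Submodule.span ℝ ((fun y => y - x₀) '' Q)).topologicalClosure) :=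
    (Submodule.isClosed_topologicalClosure _).completeSpace_coe
  haveI : CompleteSpace G := FiniteDimensional.complete ℝ G
  set T : ((Submodule.span ℝ ((fun y => y - x₀) '' Q)).topologicalClosure × G) →L[ℝ] X :=
    ((Submodule.span ℝ ((fun y => y - x₀) '' Q)).topologicalClosure).subtypeL.coprod G.subtypeL
    with hT
  have hTsurj : Function.Surjective T := by
    intro x
    have hx : x ∈ (Submodule.span ℝ ((fun y => y - x₀) '' Q)).topologicalClosure ⊔ G := by
      rw [hGsup]; trivial
    obtain ⟨y, hy, g, hg, rfl⟩ := Submodule.mem_sup.1 hx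
    exact ⟨(⟨y, hy⟩, ⟨g, hg⟩), rfl⟩
  obtain ⟨Cop, hCop, hCop'⟩ := T.exists_preimage_norm_le hTsurj
  -- Step 4: norm of the restriction to G tends to 0
  have hφ0 : Tendsto (fun k => ‖(Λk k).comp G.subtypeL‖) atTop (nhds 0) := by
    apply aux_opNorm_tendsto
    intro g
    simpa using hweak0 (g : X)
  -- Step 5: combine
  have hnormle : ∀ k, ‖Λk k‖ ≤
      Cop * (2 / r * (ε k + |Λk k x₀| + |Λk k (y₀ : X)|) + ‖(Λk k).comp G.subtypeL‖) := by
    intro k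
    have hfac_nonneg : 0 ≤ 2 / r * (ε k + |Λk k x₀| + |Λk k (y₀ : X)|) :=
      mul_nonneg (by positivity) (ha_nonneg k)
    apply ContinuousLinearMap.opNorm_le_bound
    · exact mul_nonneg hCop.le (add_nonneg hfac_nonneg (ContinuousLinearMap.opNorm_nonneg _))
    intro x
    obtain ⟨p, hpx, hpn⟩ := hCop' x
    have hx : x = ((p.1 : X)) + ((p.2 : X)) := by
      rw [← hpx]; rfl
    have hp1 : ‖p.1‖ ≤ Cop * ‖x‖ := le_trans (norm_fst_le p) hpn
    have hp2 : ‖p.2‖ ≤ Cop * ‖x‖ := le_trans (norm_snd_le p) hpn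
    have h1 := hYbound k p.1
    have h2 : |Λk k ((p.2 : X))| ≤ ‖(Λk k).comp G.subtypeL‖ * ‖p.2‖ := by
      have := ((Λk k).comp G.subtypeL).le_opNorm p.2
      simpa [Real.norm_eq_abs] using this
    calc ‖Λk k x‖ = |Λk k ((p.1 : X)) + Λk k ((p.2 : X))| := by
          rw [Real.norm_eq_abs, ← map_add, ← hx]
      _ ≤ |Λk k ((p.1 : X))| + |Λk k ((p.2 : X))| := abs_add_le _ _
      _ ≤ 2 / r * (ε k + |Λk k x₀| + |Λk k (y₀ : X)|) * (Cop * ‖x‖)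
            + ‖(Λk k).comp G.subtypeL‖ * (Cop * ‖x‖) := by
          apply add_le_add
          · exact h1.trans (mul_le_mul_of_nonneg_left hp1 hfac_nonneg)
          · exact h2.trans (mul_le_mul_of_nonneg_left hp2 (ContinuousLinearMap.opNorm_nonneg _))
      _ = Cop * (2 / r * (ε k + |Λk k x₀| + |Λk k (y₀ : X)|) + ‖(Λk k).comp G.subtypeL‖)
            * ‖x‖ := by ring
  have hB0 : Tendsto (fun k =>
      Cop * (2 / r * (ε k + |Λk k x₀| + |Λk k (y₀ : X)|) + ‖(Λk k).comp G.subtypeL‖))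
      atTop (nhds 0) := by
    have := ((ha0.const_mul (2 / r)).add hφ0).const_mul Cop
    simpa using this
  have hδ0 : δ ≤ (0 : ℝ) :=
    ge_of_tendsto hB0 (Eventually.of_forall fun k => (hnorm k).trans (hnormle k))
  linarith
end

section
/- Let V be a reflexive Banach space, X a Banach space, and F ∈ L(V; X). If there exists a finite codimensional subspace X̃ of X' and a constant C > 0 such that |φ|_{X'} ≤ C |F*(φ)|_{V'} for all φ ∈ X̃, then the range Im(F) is a closed, finite codimensional subspace of X. -/
open Submodule

/-- A sum of a closed submodule and a finite-dimensional submodule is closed. -/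
lemma aux_isClosed_sup {M : Type*} [NormedAddCommGroup M] [NormedSpace ℝ M]
    (E S : Submodule ℝ M) (hE : IsClosed (E : Set M)) [FiniteDimensional ℝ S] :
    IsClosed ((E ⊔ S : Submodule ℝ M) : Set M) := by
  haveI : IsClosed (E : Set M) := hE
  have hb : ∀ m : M, ‖E.mkQ m‖ ≤ 1 * ‖m‖ := fun m => by
    simpa using Submodule.Quotient.norm_mk_le (S := E) m
  let q : M →L[ℝ] (M ⧸ E) := LinearMap.mkContinuous E.mkQ 1 hb
  have hset : ((E ⊔ S : Submodule ℝ M) : Set M) = ⇑q ⁻¹' ((S.map E.mkQ : Submodule ℝ (M ⧸ E)) : Set (M ⧸ E)) := by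
    ext x
    simp only [Set.mem_preimage, SetLike.mem_coe, Submodule.mem_map]
    constructor
    · intro hx
      rcases Submodule.mem_sup.1 hx with ⟨e, he, s, hs, rfl⟩
      refine ⟨s, hs, ?_⟩
      have : E.mkQ s = E.mkQ (e + s) := by
        rw [Submodule.mkQ_apply, Submodule.mkQ_apply, Submodule.Quotient.eq]
        simpa using E.neg_mem he
      simpa [q, LinearMap.mkContinuous_apply] using this
    · rintro ⟨s, hs, hq⟩
      have hq' : E.mkQ s = E.mkQ x := by
        simpa [q, LinearMap.mkContinuous_apply] using hq
      have hxs : s - x ∈ E := by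
        rwa [Submodule.mkQ_apply, Submodule.mkQ_apply, Submodule.Quotient.eq] at hq'
      have : x = -(s - x) + s := by abel
      rw [this]
      exact Submodule.mem_sup.2 ⟨-(s - x), E.neg_mem hxs, s, hs, rfl⟩
  rw [hset]
  exact ((S.map E.mkQ).closed_of_finiteDimensional).preimage q.continuous

open Submodule

/-- Lift of a continuous linear map to the quotient, as a continuous linear map. -/
lemma aux_liftQ_bound {M W : Type*} [NormedAddCommGroup M] [NormedSpace ℝ M]
    [NormedAddCommGroup W] [NormedSpace ℝ W]
    (N : Submodule ℝ M) (f : M →L[ℝ] W) (h : N ≤ LinearMap.ker (f : M →ₗ[ℝ] W)) :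
    ∀ x : M ⧸ N, ‖N.liftQ (f : M →ₗ[ℝ] W) h x‖ ≤ ‖f‖ * ‖x‖ := by
  intro x
  refine le_of_forall_pos_le_add ?_
  intro ε' hε'
  have hε : (0:ℝ) < ε' / (‖f‖ + 1) := by positivity
  obtain ⟨m, hm, hmlt⟩ := Submodule.Quotient.norm_mk_lt x hε
  have hx : N.liftQ (f : M →ₗ[ℝ] W) h x = f m := by rw [← hm]; rfl
  rw [hx]
  calc ‖f m‖ ≤ ‖f‖ * ‖m‖ := f.le_opNorm m
    _ ≤ ‖f‖ * (‖x‖ + ε' / (‖f‖ + 1)) := by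
        have := f.opNorm_nonneg
        nlinarith [hmlt, f.opNorm_nonneg]
    _ ≤ ‖f‖ * ‖x‖ + ε' := by
        have h1 : ‖f‖ * (ε' / (‖f‖ + 1)) ≤ ε' := by
          rw [mul_div_assoc']
          rw [div_le_iff₀ (by positivity)]
          nlinarith [f.opNorm_nonneg]
        nlinarith [f.opNorm_nonneg]

/-- Lift to the quotient as a continuous linear map. -/
noncomputable def auxLiftCLM {M W : Type*} [NormedAddCommGroup M] [NormedSpace ℝ M]
    [NormedAddCommGroup W] [NormedSpace ℝ W]
    (N : Submodule ℝ M) (f : M →L[ℝ] W) (h : N ≤ LinearMap.ker (f : M →ₗ[ℝ] W)) :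
    (M ⧸ N) →L[ℝ] W :=
  LinearMap.mkContinuous (N.liftQ (f : M →ₗ[ℝ] W) h) ‖f‖ (aux_liftQ_bound N f h)

lemma auxLiftCLM_mk {M W : Type*} [NormedAddCommGroup M] [NormedSpace ℝ M]
    [NormedAddCommGroup W] [NormedSpace ℝ W]
    (N : Submodule ℝ M) (f : M →L[ℝ] W) (h : N ≤ LinearMap.ker (f : M →ₗ[ℝ] W)) (m : M) :
    auxLiftCLM N f h (Submodule.Quotient.mk m) = f m := rfl

/-- If every continuous functional vanishing on `W` is zero, then `W` is dense. -/
lemma aux_dense_of_forall {M : Type*} [NormedAddCommGroup M] [NormedSpace ℝ M]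
    (W : Submodule ℝ M)
    (h : ∀ φ : M →L[ℝ] ℝ, (∀ w ∈ W, φ w = 0) → φ = 0) :
    W.topologicalClosure = ⊤ := by
  by_contra hne
  have : ∃ x, x ∉ W.topologicalClosure := by
    by_contra hx
    push_neg at hx
    exact hne (Submodule.eq_top_iff'.2 hx)
  obtain ⟨x, hx⟩ := this
  obtain ⟨f, u, hfu, hux⟩ := geometric_hahn_banach_closed_point
    (W.topologicalClosure.convex) (W.isClosed_topologicalClosure) hx
  have hvanish : ∀ w ∈ W, f w = 0 := by
    intro w hw
    by_contra hfw
    have hmem : ((u + 1) / f w) • w ∈ W.topologicalClosure :=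
      Submodule.smul_mem _ _ (W.le_topologicalClosure hw)
    have := hfu _ hmem
    rw [map_smul, smul_eq_mul, div_mul_cancel₀ _ hfw] at this
    linarith
  have hf0 : f = 0 := h f hvanish
  have h0 : f 0 < u := hfu 0 (Submodule.zero_mem _)
  rw [map_zero] at h0
  rw [hf0] at hux
  simp at hux
  linarith

/-- Surjectivity from a lower bound on the adjoint. -/
lemma aux_surj {V Y : Type*} [NormedAddCommGroup V] [NormedSpace ℝ V] [CompleteSpace V]
    [NormedAddCommGroup Y] [NormedSpace ℝ Y] [CompleteSpace Y]
    (T : V →L[ℝ] Y) (c : ℝ) (hc : 0 < c)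
    (hT : ∀ g : Y →L[ℝ] ℝ, ‖g‖ ≤ c * ‖g.comp T‖) :
    Function.Surjective T := by
  -- Step (a): approximate solvability with norm control
  have ha : ∀ y : Y, y ∈ closure (⇑T '' Metric.closedBall (0:V) (c * ‖y‖)) := by
    intro y
    by_contra hy
    set K := closure (⇑T '' Metric.closedBall (0:V) (c * ‖y‖)) with hK
    have hKconv : Convex ℝ K :=
      ((convex_closedBall (0:V) (c * ‖y‖)).linear_image (T : V →ₗ[ℝ] Y)).closure
    obtain ⟨g, u, hgu, hgy⟩ := geometric_hahn_banach_closed_point hKconv isClosed_closure hy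
    have h0K : (0:Y) ∈ K := subset_closure ⟨0, Metric.mem_closedBall_self (by positivity), map_zero T⟩
    have hu0 : 0 < u := by simpa using hgu 0 h0K
    have hyne : y ≠ 0 := by
      rintro rfl
      exact hy h0K
    have hynorm : (0:ℝ) < ‖y‖ := norm_pos_iff.2 hyne
    set r := c * ‖y‖ with hr
    have hrpos : 0 < r := by positivity
    -- ‖g ∘ T‖ ≤ u / r
    have hbound : ‖g.comp T‖ ≤ u / r := by
      refine ContinuousLinearMap.opNorm_le_bound _ (by positivity) ?_
      intro v
      rcases eq_or_ne v 0 with rfl | hv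
      · simp
      have hvn : (0:ℝ) < ‖v‖ := norm_pos_iff.2 hv
      have habs : |g (T ((r / ‖v‖) • v))| ≤ u := by
        have hmem : (r / ‖v‖) • v ∈ Metric.closedBall (0:V) r := by
          rw [mem_closedBall_zero_iff, norm_smul]
          rw [Real.norm_eq_abs, abs_of_pos (by positivity)]
          rw [div_mul_cancel₀ _ (ne_of_gt hvn)]
        have h1 : g (T ((r / ‖v‖) • v)) < u := hgu _ (subset_closure ⟨_, hmem, rfl⟩)
        have hmem' : -((r / ‖v‖) • v) ∈ Metric.closedBall (0:V) r := by
          simpa [norm_neg] using hmem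
        have h2 : g (T (-((r / ‖v‖) • v))) < u := hgu _ (subset_closure ⟨_, hmem', rfl⟩)
        rw [map_neg, map_neg] at h2
        rw [abs_le]
        constructor <;> nlinarith
      rw [map_smul, map_smul, smul_eq_mul, abs_mul,
        abs_of_pos (by positivity : (0:ℝ) < r / ‖v‖)] at habs
      have h3 : r / ‖v‖ * |g (T v)| * ‖v‖ = r * |g (T v)| := by field_simp
      have h4 : r * |g (T v)| ≤ u * ‖v‖ := by
        nlinarith [mul_le_mul_of_nonneg_right habs (le_of_lt hvn)]
      have h5 : ‖(g.comp T) v‖ = |g (T v)| := by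
        rw [ContinuousLinearMap.comp_apply, Real.norm_eq_abs]
      rw [h5, div_mul_eq_mul_div, le_div_iff₀ hrpos]
      nlinarith
    have hgnorm : ‖g‖ ≤ u / ‖y‖ := by
      calc ‖g‖ ≤ c * ‖g.comp T‖ := hT g
        _ ≤ c * (u / r) := by nlinarith [hbound]
        _ = u / ‖y‖ := by rw [hr]; field_simp
    have : g y ≤ ‖g‖ * ‖y‖ := (le_abs_self _).trans (g.le_opNorm y)
    have : g y ≤ u := by
      calc g y ≤ ‖g‖ * ‖y‖ := this
        _ ≤ (u / ‖y‖) * ‖y‖ := by nlinarith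
        _ = u := by field_simp
    linarith
  -- Step (b): exact solvability
  have h1 : ∀ y : Y, ∃ v : V, ‖v‖ ≤ c * ‖y‖ ∧ ‖y - T v‖ ≤ ‖y‖ / 2 := by
    intro y
    rcases eq_or_ne y 0 with rfl | hy
    · exact ⟨0, by simp, by simp⟩
    · have hy' : (0:ℝ) < ‖y‖ := norm_pos_iff.2 hy
      have hε : (0:ℝ) < ‖y‖ / 2 := by positivity
      obtain ⟨b, hb, hd⟩ := Metric.mem_closure_iff.1 (ha y) _ hε
      obtain ⟨v, hv, rfl⟩ := hb
      rw [mem_closedBall_zero_iff] at hv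
      exact ⟨v, hv, by rw [← dist_eq_norm]; exact le_of_lt hd⟩
  choose vf hv1 hv2 using h1
  intro y
  let z : ℕ → Y := fun n => Nat.rec y (fun _ zn => zn - T (vf zn)) n
  have hz : ∀ n, z (n + 1) = z n - T (vf (z n)) := fun n => rfl
  have hznorm : ∀ n, ‖z n‖ ≤ ‖y‖ / 2 ^ n := by
    intro n
    induction n with
    | zero => simp [z]
    | succ n ih =>
      rw [hz]
      calc ‖z n - T (vf (z n))‖ ≤ ‖z n‖ / 2 := hv2 (z n)
        _ ≤ ‖y‖ / 2 ^ n / 2 := by linarith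
        _ = ‖y‖ / 2 ^ (n + 1) := by rw [pow_succ]; ring
  have hsummable : Summable (fun n => vf (z n)) := by
    refine Summable.of_norm_bounded (g := fun n => (c * ‖y‖) * (1 / 2) ^ n)
      (summable_geometric_two.mul_left _) ?_
    intro n
    calc ‖vf (z n)‖ ≤ c * ‖z n‖ := hv1 (z n)
      _ ≤ c * (‖y‖ / 2 ^ n) := by nlinarith [hznorm n, norm_nonneg (z n)]
      _ = c * ‖y‖ * (1 / 2) ^ n := by rw [one_div, inv_pow]; ring
  obtain ⟨v, hv⟩ := hsummable
  have hTv : HasSum (fun n => T (vf (z n))) (T v) := hv.mapL T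
  have hpartial : ∀ n, ∑ i ∈ Finset.range n, T (vf (z i)) = y - z n := by
    intro n
    induction n with
    | zero => simp [z]
    | succ n ih =>
      rw [Finset.sum_range_succ, ih, hz]
      abel
  have hz0 : Filter.Tendsto z Filter.atTop (nhds 0) := by
    rw [tendsto_zero_iff_norm_tendsto_zero]
    refine squeeze_zero (fun n => norm_nonneg _) hznorm ?_
    have : Filter.Tendsto (fun n : ℕ => ‖y‖ * (1 / 2 : ℝ) ^ n) Filter.atTop (nhds (‖y‖ * 0)) :=
      (tendsto_pow_atTop_nhds_zero_of_lt_one (by norm_num) (by norm_num)).const_mul _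
    simpa [div_eq_mul_inv, one_div, inv_pow] using this
  have htend : Filter.Tendsto (fun n => ∑ i ∈ Finset.range n, T (vf (z i)))
      Filter.atTop (nhds y) := by
    simp only [hpartial]
    simpa using Filter.Tendsto.sub (tendsto_const_nhds (x := y)) hz0
  exact ⟨v, tendsto_nhds_unique hTv.tendsto_sum_nat htend⟩

set_option maxHeartbeats 1000000 in
/-- If there is a finite codimensional subspace `X̃` of `X'` and `C > 0` with
`‖φ‖ ≤ C ‖F* φ‖` for all `φ ∈ X̃`, then the range of `F` is a closed, finite codimensional
subspace of `X`. -/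
theorem stmt_6 {V X : Type*}
    [NormedAddCommGroup V] [NormedSpace ℝ V] [CompleteSpace V]
    [NormedAddCommGroup X] [NormedSpace ℝ X] [CompleteSpace X]
    (hrefl : Function.Surjective (NormedSpace.inclusionInDoubleDual ℝ V))
    (F : V →L[ℝ] X)
    (Xt : Submodule ℝ (X →L[ℝ] ℝ))
    (hXt : ∃ (m : ℕ) (ψ : Fin m → (X →L[ℝ] ℝ)),
        (Submodule.span ℝ ((Xt : Set (X →L[ℝ] ℝ)) ∪ Set.range ψ)).topologicalClosure = ⊤)
    (C : ℝ) (hC : 0 < C)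
    (hest : ∀ φ ∈ Xt, ‖φ‖ ≤ C * ‖φ.comp F‖) :
    IsClosed (Set.range F) ∧
    ∃ (m : ℕ) (x : Fin m → X),
        (Submodule.span ℝ (Set.range F ∪ Set.range x)).topologicalClosure = ⊤ := by
  classical
  obtain ⟨m, ψ, hdense⟩ := hXt
  -- The adjoint operator
  let Fstar : (X →L[ℝ] ℝ) →L[ℝ] (V →L[ℝ] ℝ) :=
    LinearMap.mkContinuous
      { toFun := fun φ => φ.comp F
        map_add' := fun φ₁ φ₂ => by ext v; simp
        map_smul' := fun a φ => by ext v; simp } ‖F‖ (fun φ => by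
          calc ‖φ.comp F‖ ≤ ‖φ‖ * ‖F‖ := φ.opNorm_comp_le F
            _ = ‖F‖ * ‖φ‖ := mul_comm _ _)
  have hFstar : ∀ φ : X →L[ℝ] ℝ, Fstar φ = φ.comp F := fun φ => rfl
  let Fs : (X →L[ℝ] ℝ) →ₗ[ℝ] (V →L[ℝ] ℝ) := (Fstar : (X →L[ℝ] ℝ) →ₗ[ℝ] (V →L[ℝ] ℝ))
  have hFs : ∀ φ : X →L[ℝ] ℝ, Fs φ = Fstar φ := fun φ => rfl
  -- The closed subspace E and the finite-dimensional subspace S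
  set E : Submodule ℝ (X →L[ℝ] ℝ) := Xt.topologicalClosure with hEdef
  set S : Submodule ℝ (X →L[ℝ] ℝ) := Submodule.span ℝ (Set.range ψ) with hSdef
  haveI : FiniteDimensional ℝ S := FiniteDimensional.span_of_finite ℝ (Set.finite_range ψ)
  have hEclosed : IsClosed (E : Set (X →L[ℝ] ℝ)) := Submodule.isClosed_topologicalClosure Xt
  have hES : E ⊔ S = ⊤ := by
    have hsub : Submodule.span ℝ ((Xt : Set (X →L[ℝ] ℝ)) ∪ Set.range ψ) ≤ E ⊔ S := by
      rw [Submodule.span_union]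
      exact sup_le_sup (by rw [Submodule.span_eq Xt]; exact Xt.le_topologicalClosure) le_rfl
    have hcl : IsClosed ((E ⊔ S : Submodule ℝ (X →L[ℝ] ℝ)) : Set (X →L[ℝ] ℝ)) :=
      aux_isClosed_sup E S hEclosed
    have h := Submodule.topologicalClosure_minimal _ hsub hcl
    rw [hdense] at h
    exact top_le_iff.1 h
  -- The estimate extends to E
  have hestE : ∀ φ ∈ E, ‖φ‖ ≤ C * ‖Fstar φ‖ := by
    have hcl : IsClosed {φ : X →L[ℝ] ℝ | ‖φ‖ ≤ C * ‖Fstar φ‖} :=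
      isClosed_le continuous_norm (continuous_const.mul (continuous_norm.comp Fstar.continuous))
    intro φ hφ
    have hsub : (E : Set (X →L[ℝ] ℝ)) ⊆ {φ : X →L[ℝ] ℝ | ‖φ‖ ≤ C * ‖Fstar φ‖} := by
      rw [hEdef, Submodule.topologicalClosure_coe]
      refine closure_minimal ?_ hcl
      intro φ hφ
      have := hest φ hφ
      rwa [← hFstar] at this
    exact hsub hφ
  -- The kernel N of the adjoint
  set N : Submodule ℝ (X →L[ℝ] ℝ) := LinearMap.ker Fs with hNdef
  have hNmem : ∀ φ : X →L[ℝ] ℝ, φ ∈ N ↔ Fstar φ = 0 := by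
    intro φ; rw [hNdef, LinearMap.mem_ker]; exact Iff.rfl
  have hNclosed : IsClosed (N : Set (X →L[ℝ] ℝ)) := by
    have : (N : Set (X →L[ℝ] ℝ)) = ⇑Fstar ⁻¹' {0} := by
      ext φ; simp [hNmem φ]
    rw [this]
    exact isClosed_singleton.preimage Fstar.continuous
  have hNE : ∀ φ, φ ∈ N → φ ∈ E → φ = 0 := by
    intro φ hφN hφE
    have h1 := hestE φ hφE
    rw [(hNmem φ).1 hφN, norm_zero, mul_zero] at h1
    exact norm_le_zero_iff.1 h1
  -- N is finite dimensional
  haveI hQfd : FiniteDimensional ℝ ((X →L[ℝ] ℝ) ⧸ E) := by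
    have hmapE : Submodule.map E.mkQ E = ⊥ := by
      rw [eq_bot_iff]
      rintro x ⟨φ, hφ, rfl⟩
      rw [Submodule.mem_bot, Submodule.mkQ_apply, Submodule.Quotient.mk_eq_zero]
      exact hφ
    have hmapS : Submodule.map E.mkQ S = ⊤ := by
      have h1 : Submodule.map E.mkQ (E ⊔ S) = ⊤ := by
        rw [hES, Submodule.map_top, Submodule.range_mkQ]
      rwa [Submodule.map_sup, hmapE, bot_sup_eq] at h1
    have hsurj : Function.Surjective (E.mkQ.comp S.subtype) := by
      rw [← LinearMap.range_eq_top, LinearMap.range_comp, Submodule.range_subtype, hmapS]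
    exact Module.Finite.of_surjective (E.mkQ.comp S.subtype) hsurj
  haveI hNfd : FiniteDimensional ℝ ↥N := by
    have hinj : Function.Injective (E.mkQ.comp N.subtype) := by
      rw [injective_iff_map_eq_zero]
      rintro ⟨φ, hφ⟩ hmem
      rw [LinearMap.comp_apply, Submodule.subtype_apply] at hmem
      have hφE : φ ∈ E := by
        rwa [Submodule.mkQ_apply, Submodule.Quotient.mk_eq_zero] at hmem
      exact Subtype.ext (hNE φ hφ hφE)
    exact FiniteDimensional.of_injective (E.mkQ.comp N.subtype) hinj
  -- The range of the adjoint is closed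
  haveI : CompleteSpace ↥E := hEclosed.completeSpace_coe
  have hmapEclosed : IsClosed ((Submodule.map Fs E : Submodule ℝ (V →L[ℝ] ℝ)) : Set (V →L[ℝ] ℝ)) := by
    have hanti : AntilipschitzWith C.toNNReal (fun x : ↥E => Fstar (x : X →L[ℝ] ℝ)) := by
      refine AntilipschitzWith.of_le_mul_dist fun x y => ?_
      rw [Real.coe_toNNReal _ (le_of_lt hC), Subtype.dist_eq, dist_eq_norm, dist_eq_norm, ← map_sub]
      exact hestE _ (E.sub_mem x.2 y.2)
    have hcl := hanti.isClosed_range (Fstar.uniformContinuous.comp uniformContinuous_subtype_val)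
    have hset : Set.range (fun x : ↥E => Fstar (x : X →L[ℝ] ℝ)) = ((Submodule.map Fs E : Submodule ℝ (V →L[ℝ] ℝ)) : Set (V →L[ℝ] ℝ)) := by
      ext w
      constructor
      · rintro ⟨⟨φ, hφ⟩, rfl⟩
        exact ⟨φ, hφ, rfl⟩
      · rintro ⟨φ, hφ, rfl⟩
        exact ⟨⟨φ, hφ⟩, rfl⟩
    rwa [hset] at hcl
  have hrangeFs : LinearMap.range Fs = Submodule.map Fs E ⊔ Submodule.map Fs S := by
    rw [← Submodule.map_sup, hES, Submodule.map_top]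
  have hRclosed : IsClosed ((LinearMap.range Fs : Submodule ℝ (V →L[ℝ] ℝ)) : Set (V →L[ℝ] ℝ)) := by
    rw [hrangeFs]
    exact aux_isClosed_sup _ _ hmapEclosed
  -- Quotient by N and the lower bound for the adjoint modulo N
  haveI : IsClosed (N : Set (X →L[ℝ] ℝ)) := hNclosed
  have hNker : N ≤ LinearMap.ker Fs := le_rfl
  let fbar := auxLiftCLM N Fstar hNker
  have hfbar : ∀ φ : X →L[ℝ] ℝ, fbar (Submodule.Quotient.mk φ) = Fstar φ :=
    fun φ => auxLiftCLM_mk N Fstar hNker φ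
  set R : Submodule ℝ (V →L[ℝ] ℝ) := LinearMap.range Fs with hRdef
  haveI : CompleteSpace ↥R := hRclosed.completeSpace_coe
  have hfbarR : ∀ q : (X →L[ℝ] ℝ) ⧸ N, fbar q ∈ R := by
    intro q
    obtain ⟨φ, rfl⟩ := Submodule.Quotient.mk_surjective N q
    rw [hfbar]
    exact ⟨φ, rfl⟩
  let fbar' := fbar.codRestrict R hfbarR
  have hker : fbar'.ker = ⊥ := by
    rw [Submodule.eq_bot_iff]
    intro q hq
    obtain ⟨φ, rfl⟩ := Submodule.Quotient.mk_surjective N q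
    rw [LinearMap.mem_ker] at hq
    have h1 : fbar (Submodule.Quotient.mk φ) = 0 := by
      have := congrArg Subtype.val hq
      exact this
    rw [hfbar] at h1
    rw [Submodule.Quotient.mk_eq_zero]
    exact (hNmem φ).2 h1
  have hrange : fbar'.range = ⊤ := by
    rw [LinearMap.range_eq_top]
    rintro ⟨w, φ, rfl⟩
    exact ⟨Submodule.Quotient.mk φ, Subtype.ext (hfbar φ)⟩
  let e := ContinuousLinearEquiv.ofBijective fbar' hker hrange
  set c : ℝ := ‖e.symm.toContinuousLinearMap‖ + 1 with hcdef
  have hcpos : 0 < c := by positivity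
  have hquot : ∀ q : (X →L[ℝ] ℝ) ⧸ N, ‖q‖ ≤ c * ‖fbar q‖ := by
    intro q
    have h1 : e.symm (e q) = q := e.symm_apply_apply q
    have h2 : ‖q‖ ≤ ‖e.symm.toContinuousLinearMap‖ * ‖e q‖ := by
      conv_lhs => rw [← h1]
      exact e.symm.toContinuousLinearMap.le_opNorm (e q)
    have h3 : ‖e q‖ = ‖fbar q‖ := rfl
    rw [h3] at h2
    nlinarith [norm_nonneg (fbar q), norm_nonneg (e.symm : ↥R →L[ℝ] ((X →L[ℝ] ℝ) ⧸ N))]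
  -- The closure Y of the range of F
  set Y : Submodule ℝ X := F.range.topologicalClosure with hYdef
  have hYclosed : IsClosed (Y : Set X) := Submodule.isClosed_topologicalClosure _
  haveI : CompleteSpace ↥Y := hYclosed.completeSpace_coe
  have hFY : ∀ v, F v ∈ Y := fun v => F.range.le_topologicalClosure ⟨v, rfl⟩
  let F₀ : V →L[ℝ] ↥Y := F.codRestrict Y hFY
  -- elements of N vanish on Y
  have hNY : ∀ n ∈ N, ∀ y : ↥Y, n (y : X) = 0 := by
    intro n hn y
    have h1 : Fstar n = 0 := (hNmem n).1 hn
    have h2 : ∀ v : V, n (F v) = 0 := by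
      intro v
      have := congrArg (fun (g : V →L[ℝ] ℝ) => g v) (hFstar n ▸ h1)
      simpa using this
    have hcl : IsClosed {x : X | n x = 0} := isClosed_eq n.continuous continuous_const
    have hsub : (Y : Set X) ⊆ {x : X | n x = 0} := by
      rw [hYdef, Submodule.topologicalClosure_coe]
      refine closure_minimal ?_ hcl
      rintro _ ⟨v, rfl⟩
      exact h2 v
    exact hsub y.2
  -- Key estimate for functionals on Y
  have hkey : ∀ g : ↥Y →L[ℝ] ℝ, ‖g‖ ≤ c * ‖g.comp F₀‖ := by
    intro g
    obtain ⟨φ, hext, hnorm⟩ := exists_extension_norm_eq Y g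
    have hcomp : φ.comp F = g.comp F₀ := by
      ext v
      exact hext ⟨F v, hFY v⟩
    have hgq : ‖g‖ ≤ ‖(Submodule.Quotient.mk φ : (X →L[ℝ] ℝ) ⧸ N)‖ := by
      refine le_of_forall_pos_le_add ?_
      intro ε hε
      obtain ⟨ρ, hρ, hρn⟩ := Submodule.Quotient.norm_mk_lt
        (Submodule.Quotient.mk φ : (X →L[ℝ] ℝ) ⧸ N) hε
      have hφρ : φ - ρ ∈ N := by
        have h1 : ρ - φ ∈ N := (Submodule.Quotient.eq N).1 hρ
        simpa using N.neg_mem h1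
      have hgρ : ∀ y : ↥Y, g y = ρ (y : X) := by
        intro y
        have h1 : (φ - ρ) (y : X) = 0 := hNY _ hφρ y
        rw [ContinuousLinearMap.sub_apply] at h1
        rw [← hext y]
        linarith
      have hgle : ‖g‖ ≤ ‖ρ‖ := by
        refine ContinuousLinearMap.opNorm_le_bound _ (norm_nonneg ρ) ?_
        intro y
        rw [hgρ y]
        calc ‖ρ (y : X)‖ ≤ ‖ρ‖ * ‖(y : X)‖ := ρ.le_opNorm _
          _ = ‖ρ‖ * ‖y‖ := rfl
      linarith
    calc ‖g‖ ≤ ‖(Submodule.Quotient.mk φ : (X →L[ℝ] ℝ) ⧸ N)‖ := hgq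
      _ ≤ c * ‖fbar (Submodule.Quotient.mk φ)‖ := hquot _
      _ = c * ‖g.comp F₀‖ := by rw [hfbar, hFstar, hcomp]
  -- F₀ is surjective, hence the range of F is closed
  have hsurj : Function.Surjective F₀ := aux_surj F₀ c hcpos hkey
  have hrangeset : Set.range ⇑F = (Y : Set X) := by
    apply subset_antisymm
    · rintro _ ⟨v, rfl⟩
      exact hFY v
    · intro y hy
      obtain ⟨v, hv⟩ := hsurj ⟨y, hy⟩
      exact ⟨v, congrArg Subtype.val hv⟩
  constructor
  · rw [hrangeset]
    exact hYclosed
  -- Finite codimensionality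
  set k : ℕ := Module.finrank ℝ ↥N with hkdef
  haveI : Module.Free ℝ ↥N := Module.Free.of_divisionRing ℝ ↥N
  let b : Module.Basis (Fin k) ℝ ↥N := Module.finBasis ℝ ↥N
  -- the evaluation map into the dual of N
  let ev : X →ₗ[ℝ] Module.Dual ℝ ↥N :=
    { toFun := fun x =>
        { toFun := fun n => (n : X →L[ℝ] ℝ) x
          map_add' := fun n n' => by simp
          map_smul' := fun a n => by simp }
      map_add' := fun x x' => by ext n; simp
      map_smul' := fun a x => by ext n; simp }
  have hev_apply : ∀ (x : X) (n : ↥N), ev x n = (n : X →L[ℝ] ℝ) x := fun x n => rfl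
  have hev : Function.Surjective ev := by
    rw [← LinearMap.range_eq_top]
    by_contra hne
    set p : Submodule ℝ (Module.Dual ℝ ↥N) := LinearMap.range ev with hpdef
    haveI : Nontrivial (Module.Dual ℝ ↥N ⧸ p) :=
      Submodule.Quotient.nontrivial_iff.2 hne
    obtain ⟨q, hq⟩ := exists_ne (0 : Module.Dual ℝ ↥N ⧸ p)
    obtain ⟨g, hg⟩ : ∃ g : Module.Dual ℝ (Module.Dual ℝ ↥N ⧸ p), g q ≠ 0 := by
      by_contra hg
      push_neg at hg
      exact hq ((Module.forall_dual_apply_eq_zero_iff ℝ q).1 hg)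
    set η : Module.Dual ℝ (Module.Dual ℝ ↥N) := g ∘ₗ p.mkQ with hηdef
    set n : ↥N := (Module.evalEquiv ℝ ↥N).symm η with hndef
    have hn : ∀ x : X, (n : X →L[ℝ] ℝ) x = 0 := by
      intro x
      have h1 : η (ev x) = 0 := by
        rw [hηdef]
        have : p.mkQ (ev x) = 0 := by
          rw [Submodule.mkQ_apply, Submodule.Quotient.mk_eq_zero]
          exact LinearMap.mem_range_self ev x
        rw [LinearMap.comp_apply, this, map_zero]
      have h2 : (ev x) n = η (ev x) := by
        rw [hndef]
        exact Module.apply_evalEquiv_symm_apply ℝ ↥N (ev x) η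
      rw [← hev_apply x n, h2, h1]
    have hn0 : n = 0 := by
      have : (n : X →L[ℝ] ℝ) = 0 := ContinuousLinearMap.ext hn
      exact Subtype.ext this
    have hη0 : η ≠ 0 := by
      intro hη
      obtain ⟨d, rfl⟩ := Submodule.Quotient.mk_surjective p q
      apply hg
      have : η d = 0 := by rw [hη]; rfl
      rwa [hηdef, LinearMap.comp_apply, Submodule.mkQ_apply] at this
    apply hη0
    rw [← (Module.evalEquiv ℝ ↥N).apply_symm_apply η, ← hndef, hn0, map_zero]
  choose xv hxv using fun i => hev (b.dualBasis i)
  have hP : ∀ φ : X →L[ℝ] ℝ, φ ∈ N → (∀ i, φ (xv i) = 0) → φ = 0 := by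
    intro φ hφ hzero
    set n : ↥N := ⟨φ, hφ⟩ with hndef
    have hcoord : ∀ i, b.coord i n = 0 := by
      intro i
      have h1 : b.dualBasis i n = 0 := by
        rw [← hxv i, hev_apply]
        exact hzero i
      rwa [← Module.Basis.coe_dualBasis]
    have : n = 0 := b.forall_coord_eq_zero_iff.1 hcoord
    have := congrArg Subtype.val this
    exact this
  refine ⟨k, xv, ?_⟩
  apply aux_dense_of_forall
  intro φ hφ
  have hφF : ∀ v : V, φ (F v) = 0 := fun v =>
    hφ _ (Submodule.subset_span (Or.inl ⟨v, rfl⟩))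
  have hφx : ∀ i, φ (xv i) = 0 := fun i =>
    hφ _ (Submodule.subset_span (Or.inr ⟨i, rfl⟩))
  have hφN : φ ∈ N := by
    rw [hNmem φ, hFstar]
    ext v
    simpa using hφF v
  exact hP φ hφN hφx
end

section
/- Let V be a reflexive Banach space, X a Hilbert space, and F ∈ L(V; X). Then Im(F) is closed in X if and only if there exists a constant C > 0 such that for all h ∈ X, |h|_X ≤ C(|F*(h)|_{V'} + |Π h|_X), where Π is the orthogonal projection of X onto the orthogonal complement of the closure of Im(F). -/
open Metric RealInnerProductSpace

section Aux

variable {V X : Type*}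
  [NormedAddCommGroup V] [NormedSpace ℝ V] [CompleteSpace V]
  [NormedAddCommGroup X] [InnerProductSpace ℝ X] [CompleteSpace X]

/-- Separation step: under the estimate, every `x` in the closure of the range is in the
closure of the image of the ball of radius `C * ‖x‖`. -/
lemma stmt9_approx (F : V →L[ℝ] X) (C : ℝ) (hC : 0 < C)
    (hest : ∀ h : X, ‖h‖ ≤ C * (‖(innerSL ℝ h).comp F‖ +
        ‖(Submodule.orthogonalProjectionOnto ((LinearMap.range (F : V →ₗ[ℝ] X)).topologicalClosure)ᗮ h : X)‖))
    {x : X} (hx : x ∈ (LinearMap.range (F : V →ₗ[ℝ] X)).topologicalClosure) :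
    x ∈ closure (F '' Metric.closedBall 0 (C * ‖x‖)) := by
  set M := (LinearMap.range (F : V →ₗ[ℝ] X)).topologicalClosure with hM
  haveI : CompleteSpace M := (Submodule.isClosed_topologicalClosure _).completeSpace_coe
  by_cases hx0 : x = 0
  · subst hx0
    refine subset_closure ⟨0, by simp, by simp⟩
  have hxn : 0 < ‖x‖ := norm_pos_iff.mpr hx0
  set r : ℝ := C * ‖x‖ with hr
  have hrpos : 0 < r := mul_pos hC hxn
  by_contra hcon
  set s := closure (F '' Metric.closedBall 0 r) with hs
  have hconv : Convex ℝ s :=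
    ((convex_closedBall (0:V) r).linear_image (F : V →ₗ[ℝ] X)).closure
  obtain ⟨f, u, hfs, hfx⟩ := geometric_hahn_banach_closed_point hconv isClosed_closure hcon
  -- the Riesz representative of f
  set g : X := (InnerProductSpace.toDual ℝ X).symm f with hg
  have hgip : ∀ y : X, ⟪g, y⟫ = f y := fun y => InnerProductSpace.toDual_symm_apply
  have hu0 : 0 < u := by
    have : f (F 0) < u := hfs _ (subset_closure ⟨0, Metric.mem_closedBall_self hrpos.le, rfl⟩)
    simpa using this
  -- bound on F* g
  have hFstar : ∀ v : V, |⟪g, F v⟫| ≤ u / r * ‖v‖ := by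
    intro v
    rcases eq_or_ne v 0 with rfl | hv0
    · simp
    have hvn : 0 < ‖v‖ := norm_pos_iff.mpr hv0
    have hmem : ∀ t : V, t ∈ Metric.closedBall (0:V) r → f (F t) < u := fun t ht =>
      hfs _ (subset_closure ⟨t, ht, rfl⟩)
    have h1 : f (F ((r / ‖v‖) • v)) < u := by
      refine hmem _ ?_
      simp only [Metric.mem_closedBall, dist_zero_right, norm_smul, Real.norm_eq_abs,
        abs_of_nonneg (div_nonneg hrpos.le hvn.le)]
      rw [div_mul_cancel₀ _ hvn.ne']
    have h2 : f (F (-((r / ‖v‖) • v))) < u := by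
      refine hmem _ ?_
      simp only [Metric.mem_closedBall, dist_zero_right, norm_neg, norm_smul, Real.norm_eq_abs,
        abs_of_nonneg (div_nonneg hrpos.le hvn.le)]
      rw [div_mul_cancel₀ _ hvn.ne']
    have h3 : |f (F ((r / ‖v‖) • v))| ≤ u := by
      rw [abs_le]
      constructor
      · have := h2
        rw [map_neg, map_neg] at this
        linarith
      · exact h1.le
    have h4 : f (F ((r / ‖v‖) • v)) = (r / ‖v‖) * f (F v) := by
      rw [map_smul, map_smul]; rfl
    rw [h4, abs_mul, abs_of_nonneg (div_nonneg hrpos.le hvn.le)] at h3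
    rw [hgip, div_mul_eq_mul_div, le_div_iff₀ hrpos]
    have hr' : r / ‖v‖ * |f (F v)| * ‖v‖ = |f (F v)| * r := by field_simp
    have h5 := mul_le_mul_of_nonneg_right h3 hvn.le
    rw [hr'] at h5
    exact h5
  -- project g onto M
  set g' : X := (Submodule.orthogonalProjectionOnto M g : X) with hg'
  have hg'mem : g' ∈ M := (Submodule.orthogonalProjectionOnto M g).2
  have hgg' : g - g' ∈ Mᗮ := by exact Submodule.sub_starProjection_mem_orthogonal (K := M) g
  have hsame : ∀ v : V, ⟪g', F v⟫ = ⟪g, F v⟫ := by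
    intro v
    have hFv : F v ∈ M := Submodule.le_topologicalClosure _ (LinearMap.mem_range_self _ v)
    have : ⟪F v, g - g'⟫ = 0 := hgg' _ hFv
    rw [inner_sub_right] at this
    have c1 := real_inner_comm (F v) g'
    have c2 := real_inner_comm (F v) g
    linarith
  -- Π g' = 0
  have hPig' : (Submodule.orthogonalProjectionOnto Mᗮ g' : X) = 0 := by
    rw [Submodule.orthogonalProjectionOnto_apply_of_mem_orthogonal
      (M.le_orthogonal_orthogonal hg'mem)]
    rfl
  have hest' : ‖g'‖ ≤ C * ‖(innerSL ℝ g').comp F‖ := by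
    have := hest g'
    rw [hPig'] at this
    simpa using this
  have hFg'norm : ‖(innerSL ℝ g').comp F‖ ≤ u / r := by
    refine ContinuousLinearMap.opNorm_le_bound _ (div_nonneg hu0.le hrpos.le) fun v => ?_
    have : ((innerSL ℝ g').comp F) v = ⟪g', F v⟫ := rfl
    rw [this, Real.norm_eq_abs, hsame]
    exact hFstar v
  have hg'norm : ‖g'‖ ≤ u / ‖x‖ := by
    calc ‖g'‖ ≤ C * (u / r) := hest'.trans (by
          exact mul_le_mul_of_nonneg_left hFg'norm hC.le)
      _ = u / ‖x‖ := by rw [hr]; field_simp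
  -- contradiction
  have hx' : ⟪g', x⟫ = ⟪g, x⟫ := by
    have : ⟪x, g - g'⟫ = 0 := hgg' _ hx
    rw [inner_sub_right] at this
    have c1 := real_inner_comm x g'
    have c2 := real_inner_comm x g
    linarith
  have h5 : u < ⟪g', x⟫ := by rw [hx', hgip]; exact hfx
  have h6 : ⟪g', x⟫ ≤ ‖g'‖ * ‖x‖ := real_inner_le_norm _ _
  have h7 : ‖g'‖ * ‖x‖ ≤ u := by
    calc ‖g'‖ * ‖x‖ ≤ u / ‖x‖ * ‖x‖ := mul_le_mul_of_nonneg_right hg'norm hxn.le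
      _ = u := div_mul_cancel₀ _ hxn.ne'
  linarith

/-- Iteration step: under the estimate, the range of `F` contains the closure of the range. -/
lemma stmt9_surj (F : V →L[ℝ] X) (C : ℝ) (hC : 0 < C)
    (hest : ∀ h : X, ‖h‖ ≤ C * (‖(innerSL ℝ h).comp F‖ +
        ‖(Submodule.orthogonalProjectionOnto ((LinearMap.range (F : V →ₗ[ℝ] X)).topologicalClosure)ᗮ h : X)‖))
    {x : X} (hx : x ∈ (LinearMap.range (F : V →ₗ[ℝ] X)).topologicalClosure) :
    x ∈ LinearMap.range (F : V →ₗ[ℝ] X) := by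
  set M := (LinearMap.range (F : V →ₗ[ℝ] X)).topologicalClosure with hM
  have hstep : ∀ m : X, m ∈ M → ∃ v : V, ‖v‖ ≤ C * ‖m‖ ∧ ‖m - F v‖ ≤ ‖m‖ / 2 := by
    intro m hm
    rcases eq_or_ne m 0 with rfl | hm0
    · exact ⟨0, by simp, by simp⟩
    have hmn : 0 < ‖m‖ := norm_pos_iff.mpr hm0
    have hcl := stmt9_approx F C hC hest hm
    rw [Metric.mem_closure_iff] at hcl
    obtain ⟨y, hy, hdist⟩ := hcl (‖m‖ / 2) (by positivity)
    obtain ⟨v, hv, rfl⟩ := hy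
    refine ⟨v, ?_, ?_⟩
    · simpa [dist_zero_right] using Metric.mem_closedBall.mp hv
    · rw [← dist_eq_norm]; exact hdist.le
  choose! pick hpick1 hpick2 using hstep
  let y : ℕ → X := fun n => n.rec x (fun _ yn => yn - F (pick yn))
  have hy0 : y 0 = x := rfl
  have hysucc : ∀ n, y (n + 1) = y n - F (pick (y n)) := fun n => rfl
  have hymem : ∀ n, y n ∈ M := by
    intro n
    induction n with
    | zero => exact hx
    | succ n ih =>
      rw [hysucc]
      exact sub_mem ih (Submodule.le_topologicalClosure _ (LinearMap.mem_range_self _ _))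
  have hynorm : ∀ n, ‖y n‖ ≤ ‖x‖ / 2 ^ n := by
    intro n
    induction n with
    | zero => rw [hy0]; simp
    | succ n ih =>
      rw [hysucc]
      calc ‖y n - F (pick (y n))‖ ≤ ‖y n‖ / 2 := hpick2 _ (hymem n)
        _ ≤ ‖x‖ / 2 ^ n / 2 := by linarith
        _ = ‖x‖ / 2 ^ (n + 1) := by ring
  have hvnorm : ∀ n, ‖pick (y n)‖ ≤ C * ‖x‖ * (1 / 2) ^ n := by
    intro n
    calc ‖pick (y n)‖ ≤ C * ‖y n‖ := hpick1 _ (hymem n)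
      _ ≤ C * (‖x‖ / 2 ^ n) := mul_le_mul_of_nonneg_left (hynorm n) hC.le
      _ = C * ‖x‖ * (1 / 2) ^ n := by rw [div_pow, one_pow]; ring
  have hsum : Summable fun n => pick (y n) := by
    refine Summable.of_norm_bounded (summable_geometric_two.mul_left (C * ‖x‖)) ?_
    intro n
    simpa [div_pow] using hvnorm n
  set v : V := ∑' n, pick (y n) with hv
  have hsumF : Summable fun n => F (pick (y n)) :=
    hsum.map (F : V →ₗ[ℝ] X).toAddMonoidHom F.continuous
  have hFv : F v = ∑' n, F (pick (y n)) := F.map_tsum hsum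
  have hpartial : ∀ n, ∑ i ∈ Finset.range n, F (pick (y i)) = x - y n := by
    intro n
    have : ∀ i, F (pick (y i)) = y i - y (i + 1) := by
      intro i; rw [hysucc]; abel
    simp only [this]
    rw [Finset.sum_range_sub' (fun i => y i) n, hy0]
  have hylim : Filter.Tendsto y Filter.atTop (nhds 0) := by
    refine squeeze_zero_norm hynorm ?_
    have : Filter.Tendsto (fun n : ℕ => ‖x‖ * (1 / 2) ^ n) Filter.atTop (nhds (‖x‖ * 0)) :=
      (tendsto_pow_atTop_nhds_zero_of_lt_one (by norm_num) (by norm_num)).const_mul ‖x‖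
    rw [mul_zero] at this
    refine this.congr fun n => ?_
    rw [div_pow, one_pow]; ring
  have htends : Filter.Tendsto (fun n => ∑ i ∈ Finset.range n, F (pick (y i)))
      Filter.atTop (nhds x) := by
    simp only [hpartial]
    simpa using (tendsto_const_nhds (x := x)).sub hylim
  have : (∑' n, F (pick (y n))) = x :=
    tendsto_nhds_unique hsumF.hasSum.tendsto_sum_nat htends
  exact ⟨v, by show F v = x; rw [hFv, this]⟩

end Aux

set_option maxHeartbeats 1000000 in
/-- For `V` a reflexive Banach space, `X` a Hilbert space (identified with its
dual via Riesz, so `F* h = ⟪h, F ·⟫`) and `F ∈ L(V;X)`, `Im F` is closed iff there is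
`C > 0` such that `‖h‖ ≤ C (‖F* h‖ + ‖Π h‖)` for all `h ∈ X`, where `Π` is the orthogonal
projection onto the orthogonal complement of the closure of `Im F`. -/
theorem stmt_9 {V X : Type*}
    [NormedAddCommGroup V] [NormedSpace ℝ V] [CompleteSpace V]
    [NormedAddCommGroup X] [InnerProductSpace ℝ X] [CompleteSpace X]
    (hrefl : Function.Surjective (NormedSpace.inclusionInDoubleDual ℝ V))
    (F : V →L[ℝ] X) :
    IsClosed (Set.range F) ↔
      ∃ C : ℝ, 0 < C ∧ ∀ h : X,
        ‖h‖ ≤ C * (‖(innerSL ℝ h).comp F‖ +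
          ‖(Submodule.orthogonalProjectionOnto ((LinearMap.range (F : V →ₗ[ℝ] X)).topologicalClosure)ᗮ h : X)‖) := by
  constructor
  · intro hclosed
    have hcl' : IsClosed ((LinearMap.range (F : V →ₗ[ℝ] X) : Submodule ℝ X) : Set X) := by
      simpa [LinearMap.coe_range] using hclosed
    have hMeq : (LinearMap.range (F : V →ₗ[ℝ] X)).topologicalClosure = LinearMap.range (F : V →ₗ[ℝ] X) :=
      IsClosed.submodule_topologicalClosure_eq hcl'
    haveI : CompleteSpace (LinearMap.range (F : V →ₗ[ℝ] X)) := hcl'.completeSpace_coe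
    haveI : CompleteSpace ((LinearMap.range (F : V →ₗ[ℝ] X)).topologicalClosure) :=
      ((LinearMap.range (F : V →ₗ[ℝ] X)).isClosed_topologicalClosure).completeSpace_coe
    set G : V →L[ℝ] (LinearMap.range (F : V →ₗ[ℝ] X)) :=
      F.codRestrict (LinearMap.range (F : V →ₗ[ℝ] X)) (fun v => LinearMap.mem_range_self _ v) with hG
    have hGsurj : Function.Surjective G := by
      rintro ⟨w, hw⟩
      obtain ⟨v, hv⟩ := hw
      exact ⟨v, Subtype.ext hv⟩
    obtain ⟨c, hc, hcb⟩ := ContinuousLinearMap.exists_preimage_norm_le G hGsurj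
    refine ⟨c + 1, by linarith, fun h => ?_⟩
    set M := (LinearMap.range (F : V →ₗ[ℝ] X)).topologicalClosure with hM
    set m : X := (Submodule.orthogonalProjectionOnto M h : X) with hm
    set p : X := (Submodule.orthogonalProjectionOnto Mᗮ h : X) with hp
    have hdecomp : m + p = h := by exact Submodule.starProjection_add_starProjection_orthogonal (K := M) h
    have hmM : m ∈ M := (Submodule.orthogonalProjectionOnto M h).2
    have hmmem : m ∈ LinearMap.range (F : V →ₗ[ℝ] X) := hMeq ▸ hmM
    have hpmem : p ∈ Mᗮ := (Submodule.orthogonalProjectionOnto Mᗮ h).2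
    obtain ⟨v, hGv, hvn⟩ := hcb ⟨m, hmmem⟩
    have hFv : F v = m := by
      have := congrArg Subtype.val hGv
      simpa [hG] using this
    have hvnorm : ‖v‖ ≤ c * ‖m‖ := by simpa using hvn
    have hinner : ⟪h, F v⟫ = ‖m‖ ^ 2 := by
      have h1 : ⟪p, m⟫ = 0 := by
        rw [real_inner_comm]
        exact (Submodule.mem_orthogonal M p).mp hpmem m hmM
      rw [hFv, ← hdecomp, inner_add_left, real_inner_self_eq_norm_sq, h1, add_zero]
    have happly : ((innerSL ℝ h).comp F) v = ⟪h, F v⟫ := rfl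
    have hmn : ‖m‖ ^ 2 ≤ c * ‖(innerSL ℝ h).comp F‖ * ‖m‖ := by
      calc ‖m‖ ^ 2 = ((innerSL ℝ h).comp F) v := by rw [happly, hinner]
        _ ≤ ‖((innerSL ℝ h).comp F) v‖ := le_abs_self _
        _ ≤ ‖(innerSL ℝ h).comp F‖ * ‖v‖ := ((innerSL ℝ h).comp F).le_opNorm v
        _ ≤ ‖(innerSL ℝ h).comp F‖ * (c * ‖m‖) :=
            mul_le_mul_of_nonneg_left hvnorm (norm_nonneg _)
        _ = c * ‖(innerSL ℝ h).comp F‖ * ‖m‖ := by ring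
    have hfin : ‖h‖ ≤ ‖m‖ + ‖p‖ := by rw [← hdecomp]; exact norm_add_le _ _
    have hm0 : (0:ℝ) ≤ ‖m‖ := norm_nonneg _
    have hK : ‖m‖ ≤ c * ‖(innerSL ℝ h).comp F‖ := by
      rcases eq_or_lt_of_le hm0 with h0 | h0
      · rw [← h0]; positivity
      · nlinarith [hmn]
    nlinarith [norm_nonneg ((innerSL ℝ h).comp F), norm_nonneg p, hfin, hK]
  · rintro ⟨C, hC, hest⟩
    have hsub : (((LinearMap.range (F : V →ₗ[ℝ] X)).topologicalClosure : Submodule ℝ X) : Set X)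
        ⊆ Set.range F := fun x hx => stmt9_surj F C hC hest hx
    have heq : Set.range F = (((LinearMap.range (F : V →ₗ[ℝ] X)).topologicalClosure : Submodule ℝ X) : Set X) :=
      Set.Subset.antisymm
        (fun x hx => Submodule.le_topologicalClosure _ (by simpa using hx)) hsub
    rw [heq]
    exact (LinearMap.range (F : V →ₗ[ℝ] X)).isClosed_topologicalClosure
end

section
/- Let V be a reflexive Banach space, X a Banach space, f : D(f) ⊆ V → X locally Lipschitz continuous and directionally differentiable, with D(f) ⊆ V closed and convex. Then for any e ∈ D(f) and any v in the tangent cone of D(f) at e with |v|_V ≤ 1, the directional derivative f'(e; v) = lim_{h→0⁺} (f(e+hv) − f(e))/h is a variation of f at e, i.e., there exist hₖ > 0 with hₖ → 0 and eₖ ∈ D(f) with |eₖ − e|_V ≤ hₖ such that (f(eₖ) − f(e))/hₖ → f'(e; v). -/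
open Filter Topology

/-- Let `V` be a reflexive Banach space, `X` Banach, `D ⊆ V` closed convex,
`f` locally Lipschitz on a neighbourhood of each point of `D` and directionally
differentiable. Then for `e ∈ D` and `v` in the tangent cone of `D` at `e` with `‖v‖ ≤ 1`,
the directional derivative `f'(e;v)` is a variation of `f` at `e`: there are `hₖ > 0`,
`hₖ → 0`, and `eₖ ∈ D` with `‖eₖ - e‖ ≤ hₖ` such that `(f(eₖ) - f(e))/hₖ → f'(e;v)`. -/
theorem stmt_11 {V X : Type*}
    [NormedAddCommGroup V] [NormedSpace ℝ V] [CompleteSpace V]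
    [NormedAddCommGroup X] [NormedSpace ℝ X] [CompleteSpace X]
    (hrefl : Function.Surjective (NormedSpace.inclusionInDoubleDual ℝ V))
    (D : Set V) (hDclosed : IsClosed D) (hDconv : Convex ℝ D)
    (f : V → X)
    (hLip : ∀ x ∈ D, ∃ (K : NNReal) (r : ℝ), 0 < r ∧ LipschitzOnWith K f (Metric.ball x r))
    (e : V) (he : e ∈ D)
    (f' : V → X)
    (hdiff : ∀ w ∈ closure {w : V | ∃ α : ℝ, 0 ≤ α ∧ ∃ y ∈ D, w = α • (y - e)},
      Tendsto (fun h : ℝ => h⁻¹ • (f (e + h • w) - f e)) (𝓝[>] 0) (𝓝 (f' w)))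
    (v : V)
    (hv : v ∈ closure {w : V | ∃ α : ℝ, 0 ≤ α ∧ ∃ y ∈ D, w = α • (y - e)})
    (hv1 : ‖v‖ ≤ 1) :
    ∃ (hk : ℕ → ℝ) (ek : ℕ → V),
      (∀ k, 0 < hk k) ∧ Tendsto hk atTop (𝓝 0) ∧
      (∀ k, ek k ∈ D) ∧ (∀ k, ‖ek k - e‖ ≤ hk k) ∧
      Tendsto (fun k => (hk k)⁻¹ • (f (ek k) - f e)) atTop (𝓝 (f' v)) := by
  classical
  set S : Set V := {w : V | ∃ α : ℝ, 0 ≤ α ∧ ∃ y ∈ D, w = α • (y - e)} with hSdef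
  obtain ⟨K, r, hr, hK⟩ := hLip e he
  -- f' is Lipschitz on the closure of the radial cone
  have lipf' : ∀ w ∈ closure S, ∀ w' ∈ closure S, ‖f' w - f' w'‖ ≤ K * ‖w - w'‖ := by
    intro w hw w' hw'
    have hlim : Tendsto
        (fun h : ℝ => ‖(h⁻¹ • (f (e + h • w) - f e)) - (h⁻¹ • (f (e + h • w') - f e))‖)
        (𝓝[>] (0:ℝ)) (𝓝 ‖f' w - f' w'‖) := ((hdiff w hw).sub (hdiff w' hw')).norm
    refine le_of_tendsto hlim ?_
    have hM : (0:ℝ) < r / (‖w‖ + ‖w'‖ + 1) := by positivity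
    filter_upwards [Ioo_mem_nhdsGT_of_mem ⟨le_refl (0:ℝ), hM⟩] with h hh
    obtain ⟨hh0, hhM⟩ := hh
    have hball : ∀ u : V, ‖u‖ ≤ ‖w‖ + ‖w'‖ → e + h • u ∈ Metric.ball e r := by
      intro u hu
      rw [Metric.mem_ball, dist_eq_norm, add_sub_cancel_left, norm_smul,
        Real.norm_of_nonneg hh0.le]
      have : h * ‖u‖ ≤ h * (‖w‖ + ‖w'‖ + 1) := by
        apply mul_le_mul_of_nonneg_left _ hh0.le
        linarith
      have h2 : h * (‖w‖ + ‖w'‖ + 1) < r := by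
        rw [lt_div_iff₀ (by positivity)] at hhM
        linarith
      linarith
    have hd : dist (f (e + h • w)) (f (e + h • w')) ≤ K * dist (e + h • w) (e + h • w') :=
      hK.dist_le_mul _ (hball w (by linarith [norm_nonneg w'])) _
        (hball w' (by linarith [norm_nonneg w]))
    rw [← smul_sub, sub_sub_sub_cancel_right, norm_smul, Real.norm_of_nonneg (inv_nonneg.2 hh0.le)]
    have hdd : dist (e + h • w) (e + h • w') = h * ‖w - w'‖ := by
      rw [dist_eq_norm]
      have : e + h • w - (e + h • w') = h • (w - w') := by
        rw [smul_sub]; abel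
      rw [this, norm_smul, Real.norm_of_nonneg hh0.le]
    rw [dist_eq_norm] at hd
    rw [hdd] at hd
    calc h⁻¹ * ‖f (e + h • w) - f (e + h • w')‖ ≤ h⁻¹ * (K * (h * ‖w - w'‖)) := by
          exact mul_le_mul_of_nonneg_left hd (inv_nonneg.2 hh0.le)
      _ = (h⁻¹ * h) * ((K : ℝ) * ‖w - w'‖) := by ring
      _ = (K : ℝ) * ‖w - w'‖ := by rw [inv_mul_cancel₀ hh0.ne', one_mul]
  -- choose approximating sequence in the radial cone
  have hseq : ∀ k : ℕ, ∃ w ∈ S, ‖w - v‖ < 1 / (k + 1) := by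
    intro k
    rcases Metric.mem_closure_iff.1 hv (1 / (k + 1)) (by positivity) with ⟨b, hbS, hbd⟩
    exact ⟨b, hbS, by rwa [dist_eq_norm, norm_sub_rev] at hbd⟩
  choose w hwS hwv using hseq
  -- normalize to norm ≤ 1
  set w' : ℕ → V := fun k => (max 1 ‖w k‖)⁻¹ • w k with hw'def
  have hm1 : ∀ k, (1:ℝ) ≤ max 1 ‖w k‖ := fun k => le_max_left _ _
  have hm0 : ∀ k, (0:ℝ) < max 1 ‖w k‖ := fun k => lt_of_lt_of_le one_pos (hm1 k)
  have hw'S : ∀ k, w' k ∈ S := by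
    intro k
    obtain ⟨α, hα, y, hy, hweq⟩ := hwS k
    exact ⟨(max 1 ‖w k‖)⁻¹ * α, mul_nonneg (inv_nonneg.2 (hm0 k).le) hα, y, hy, by
      rw [hw'def]; simp only [hweq, smul_smul]⟩
  have hw'norm : ∀ k, ‖w' k‖ ≤ 1 := by
    intro k
    rw [hw'def]
    simp only [norm_smul, norm_inv, Real.norm_of_nonneg (hm0 k).le]
    calc (max 1 ‖w k‖)⁻¹ * ‖w k‖ ≤ (max 1 ‖w k‖)⁻¹ * (max 1 ‖w k‖) :=
          mul_le_mul_of_nonneg_left (le_max_right _ _) (inv_nonneg.2 (hm0 k).le)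
      _ = 1 := inv_mul_cancel₀ (hm0 k).ne'
  have hw'v : ∀ k, ‖w' k - v‖ ≤ 2 / (k + 1) := by
    intro k
    have hwk : ‖w k‖ ≤ 1 + 1 / (k + 1) := by
      have := hwv k
      have htri := norm_sub_norm_le (w k) v
      calc ‖w k‖ ≤ ‖w k - v‖ + ‖v‖ := by linarith
        _ ≤ 1 / (k + 1) + 1 := by linarith
        _ = 1 + 1 / (k + 1) := by ring
    have hmle : max 1 ‖w k‖ ≤ 1 + 1 / (k + 1) := by
      apply max_le _ hwk
      have : (0:ℝ) < 1 / (k + 1) := by positivity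
      linarith
    set m := max 1 ‖w k‖ with hmdef
    have h1 : ‖w' k - w k‖ ≤ m - 1 := by
      have : w' k - w k = (m⁻¹ - 1) • w k := by
        rw [hw'def, sub_smul, one_smul]
      rw [this, norm_smul]
      have hinv1 : m⁻¹ ≤ 1 := by
        rw [inv_le_one_iff₀]; right; exact hm1 k
      have : ‖m⁻¹ - 1‖ = 1 - m⁻¹ := by
        rw [Real.norm_eq_abs, abs_sub_comm, abs_of_nonneg (by linarith)]
      rw [this]
      have hwm : ‖w k‖ ≤ m := le_max_right _ _
      calc (1 - m⁻¹) * ‖w k‖ ≤ (1 - m⁻¹) * m := by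
            apply mul_le_mul_of_nonneg_left hwm; linarith
        _ = m - 1 := by
            rw [sub_mul, one_mul, inv_mul_cancel₀ (hm0 k).ne']
      -- done
    calc ‖w' k - v‖ ≤ ‖w' k - w k‖ + ‖w k - v‖ := by
          have := norm_sub_le_norm_sub_add_norm_sub (w' k) (w k) v
          linarith [this]
      _ ≤ (m - 1) + 1 / (k + 1) := by
          have := (hwv k).le
          linarith [h1]
      _ ≤ 2 / (k + 1) := by
          have : m - 1 ≤ 1 / (k + 1) := by linarith [hmle]
          have h2 : (2:ℝ) / (k + 1) = 1 / (k+1) + 1 / (k+1) := by ring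
          linarith
  -- extract radial representation of w' k
  have hw'S' : ∀ k, ∃ β : ℝ, 0 ≤ β ∧ ∃ y ∈ D, w' k = β • (y - e) := fun k => hw'S k
  choose β hβ y hy hweq using hw'S'
  -- choose step sizes hk
  have hstep : ∀ k : ℕ, ∃ h : ℝ, 0 < h ∧ h < 1 / (k + 1) ∧ h * β k ≤ 1 ∧
      ‖(h⁻¹ • (f (e + h • w' k) - f e)) - f' (w' k)‖ < 1 / (k + 1) := by
    intro k
    have htd := hdiff (w' k) (subset_closure (hw'S k))
    have hev : ∀ᶠ h in 𝓝[>] (0:ℝ),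
        ‖(h⁻¹ • (f (e + h • w' k) - f e)) - f' (w' k)‖ < 1 / (k + 1) := by
      have := htd (Metric.ball_mem_nhds (f' (w' k)) (show (0:ℝ) < 1/(k+1) by positivity))
      filter_upwards [this] with h hh
      simpa [Metric.mem_ball, dist_eq_norm] using hh
    have hβ1 : (0:ℝ) < β k + 1 := by have := hβ k; linarith
    have hδ : (0:ℝ) < min (1 / ((k:ℝ) + 1)) (1 / (β k + 1)) := by
      apply lt_min (by positivity) (by positivity)
    have hev2 : Set.Ioo (0:ℝ) (min (1 / ((k:ℝ) + 1)) (1 / (β k + 1))) ∈ 𝓝[>] (0:ℝ) :=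
      Ioo_mem_nhdsGT_of_mem ⟨le_refl _, hδ⟩
    rcases (hev.and (eventually_of_mem hev2 (fun x hx => hx))).exists with ⟨h, hh1, hh2, hh3⟩
    refine ⟨h, hh2, lt_of_lt_of_le hh3 (min_le_left _ _), ?_, hh1⟩
    have hβ2 : h < 1 / (β k + 1) := lt_of_lt_of_le hh3 (min_le_right _ _)
    have : h * (β k + 1) < 1 := by
      rw [lt_div_iff₀ hβ1] at hβ2
      linarith
    nlinarith [hβ k, hh2.le]
  choose hk hk0 hklt hkβ hkq using hstep
  refine ⟨hk, fun k => e + hk k • w' k, hk0, ?_, ?_, ?_, ?_⟩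
  · -- hk → 0
    apply squeeze_zero (fun k => (hk0 k).le) (fun k => (hklt k).le)
    exact tendsto_one_div_add_atTop_nhds_zero_nat
  · -- membership in D
    intro k
    show e + hk k • w' k ∈ D
    have : e + hk k • w' k = e + (hk k * β k) • (y k - e) := by
      rw [hweq k, smul_smul]
    rw [this]
    exact hDconv.add_smul_sub_mem he (hy k)
      ⟨mul_nonneg (hk0 k).le (hβ k), hkβ k⟩
  · -- norm bound
    intro k
    show ‖e + hk k • w' k - e‖ ≤ hk k
    rw [add_sub_cancel_left, norm_smul, Real.norm_of_nonneg (hk0 k).le]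
    calc hk k * ‖w' k‖ ≤ hk k * 1 := mul_le_mul_of_nonneg_left (hw'norm k) (hk0 k).le
      _ = hk k := mul_one _
  · -- convergence
    rw [tendsto_iff_norm_sub_tendsto_zero]
    apply squeeze_zero (fun k => norm_nonneg _)
      (g := fun k : ℕ => 1 / (k + 1) + K * (2 / (k + 1)))
    · intro k
      have h1 := hkq k
      have h2 := lipf' (w' k) (subset_closure (hw'S k)) v hv
      have h3 := hw'v k
      calc ‖(hk k)⁻¹ • (f (e + hk k • w' k) - f e) - f' v‖
          ≤ ‖(hk k)⁻¹ • (f (e + hk k • w' k) - f e) - f' (w' k)‖ + ‖f' (w' k) - f' v‖ := by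
            have := norm_sub_le_norm_sub_add_norm_sub
              ((hk k)⁻¹ • (f (e + hk k • w' k) - f e)) (f' (w' k)) (f' v)
            linarith
        _ ≤ 1 / (k + 1) + K * (2 / (k + 1)) := by
            have h4 : ‖f' (w' k) - f' v‖ ≤ K * (2 / (k + 1)) :=
              le_trans h2 (mul_le_mul_of_nonneg_left h3 K.2)
            linarith
    · have hlim : Tendsto (fun k : ℕ => 1 / ((k:ℝ) + 1)) atTop (𝓝 0) :=
        tendsto_one_div_add_atTop_nhds_zero_nat
      have h1 : Tendsto (fun k : ℕ => (K:ℝ) * (2 / ((k:ℝ) + 1))) atTop (𝓝 0) := by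
        have h2 := hlim.const_mul ((K:ℝ) * 2)
        rw [mul_zero] at h2
        exact Tendsto.congr (fun k => by ring) h2
      simpa using hlim.add h1
end

section
/- Let V be a reflexive Banach space, X a Banach space, f : D(f) ⊆ V → X with D(f) closed and convex, and suppose f is Fréchet differentiable at each point of D(f). Then the set of variations of f at e ∈ D(f) equals {f'(e)v : v ∈ I_{D(f)}(e), |v|_V ≤ 1}, where I_{D(f)}(e) is the tangent cone of D(f) at e. In particular, if e lies in the interior of D(f), then Var f(e) = {f'(e)v : |v|_V ≤ 1}. -/
open Filter Topology

section AuxStmt12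

open NormedSpace Metric

set_option linter.unusedSectionVars false
set_option linter.unusedVariables false

variable {V : Type*} [NormedAddCommGroup V] [NormedSpace ℝ V]

lemma aux_pair_inj : Function.Injective ((topDualPairing ℝ V).flip) := by
  intro x y h
  apply NormedSpace.eq_iff_forall_dual_eq ℝ |>.2
  intro g
  have := congrArg (fun m => m g) h
  simpa using this

lemma aux_emb :
    IsEmbedding (fun x : WeakSpace ℝ V =>
      (StrongDual.toWeakDual (inclusionInDoubleDual ℝ V ((toWeakSpace ℝ V).symm x)))) := by
  have e1 : IsEmbedding fun (x : WeakSpace ℝ V) y => (topDualPairing ℝ V).flip x y :=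
    WeakBilin.isEmbedding aux_pair_inj
  have e2 : IsEmbedding fun (x : WeakDual ℝ (StrongDual ℝ V)) y => topDualPairing ℝ (StrongDual ℝ V) x y :=
    WeakBilin.isEmbedding ContinuousLinearMap.coe_injective
  have hcomp : (fun (x : WeakDual ℝ (StrongDual ℝ V)) y => topDualPairing ℝ (StrongDual ℝ V) x y) ∘
      (fun x : WeakSpace ℝ V =>
        (StrongDual.toWeakDual (inclusionInDoubleDual ℝ V ((toWeakSpace ℝ V).symm x)))) =
      fun (x : WeakSpace ℝ V) y => (topDualPairing ℝ V).flip x y := rfl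
  have hcont : Continuous (fun x : WeakSpace ℝ V =>
      (StrongDual.toWeakDual (inclusionInDoubleDual ℝ V ((toWeakSpace ℝ V).symm x)))) := by
    apply WeakBilin.continuous_of_continuous_eval
    intro y
    exact WeakBilin.eval_continuous ((topDualPairing ℝ V).flip) y
  exact IsEmbedding.of_comp hcont e2.continuous (hcomp ▸ e1)

lemma aux_weak_compact
    (hrefl : Function.Surjective (NormedSpace.inclusionInDoubleDual ℝ V))
    {C : Set V} (hC : IsClosed C) (hconv : Convex ℝ C) (hbdd : C ⊆ closedBall 0 1) :
    IsCompact (toWeakSpace ℝ V '' C) := by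
  set g : WeakSpace ℝ V → WeakDual ℝ (StrongDual ℝ V) := fun x =>
    (StrongDual.toWeakDual (inclusionInDoubleDual ℝ V ((toWeakSpace ℝ V).symm x))) with hg
  have hemb : IsEmbedding g := aux_emb
  have hsurj : Function.Surjective g := by
    intro y
    obtain ⟨x, hx⟩ := hrefl (WeakDual.toStrongDual y)
    exact ⟨toWeakSpace ℝ V x, by simp [hg, hx]⟩
  let h : WeakSpace ℝ V ≃ₜ WeakDual ℝ (StrongDual ℝ V) :=
    (Equiv.ofBijective g ⟨hemb.injective, hsurj⟩).toHomeomorphOfIsInducing hemb.toIsInducing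
  rw [← h.isCompact_image]
  have himg : (h '' (toWeakSpace ℝ V '' C)) = g '' (toWeakSpace ℝ V '' C) := rfl
  rw [himg]
  -- the image is a closed subset of the compact closed ball
  have hball : g '' (toWeakSpace ℝ V '' C) ⊆ WeakDual.toStrongDual ⁻¹' closedBall 0 1 := by
    rintro - ⟨-, ⟨x, hxC, rfl⟩, rfl⟩
    simp only [Set.mem_preimage, mem_closedBall, dist_zero_right]
    have : ‖inclusionInDoubleDual ℝ V x‖ = ‖x‖ :=
      (NormedSpace.inclusionInDoubleDualLi (𝕜 := ℝ) (E := V)).norm_map x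
    have hx1 : ‖x‖ ≤ 1 := by simpa [mem_closedBall, dist_zero_right] using hbdd hxC
    exact (dist_zero_right (inclusionInDoubleDual ℝ V x)).trans_le (this.trans_le hx1)
  have hclosedw : IsClosed (toWeakSpace ℝ V '' C) := by
    have := hconv.toWeakSpace_closure (𝕜 := ℝ)
    rw [hC.closure_eq] at this
    rw [this]
    exact isClosed_closure
  have hclosed : IsClosed (g '' (toWeakSpace ℝ V '' C)) := by
    rw [← himg]; exact h.isClosedMap _ hclosedw
  refine (WeakDual.isCompact_closedBall (𝕜 := ℝ) (E := StrongDual ℝ V) 0 1).of_isClosed_subset hclosed ?_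
  exact hball

variable {X : Type*} [NormedAddCommGroup X] [NormedSpace ℝ X]

lemma aux_tendsto_e {hk : ℕ → ℝ} {ek : ℕ → V} {e : V}
    (h0 : Tendsto hk atTop (𝓝 0)) (hle : ∀ k, ‖ek k - e‖ ≤ hk k) :
    Tendsto ek atTop (𝓝 e) := by
  rw [tendsto_iff_norm_sub_tendsto_zero]
  exact squeeze_zero (fun k => norm_nonneg _) hle h0

lemma aux_deriv {f : V → X} {T : V →L[ℝ] X} {e : V} (hf : HasFDerivAt f T e)
    {hk : ℕ → ℝ} {ek : ℕ → V} (hpos : ∀ k, 0 < hk k) (h0 : Tendsto hk atTop (𝓝 0))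
    (hle : ∀ k, ‖ek k - e‖ ≤ hk k) :
    Tendsto (fun k => (hk k)⁻¹ • (f (ek k) - f e - T (ek k - e))) atTop (𝓝 0) := by
  have htend : Tendsto ek atTop (𝓝 e) := aux_tendsto_e h0 hle
  have hlo : (fun k => f (ek k) - f e - T (ek k - e)) =o[atTop] fun k => ek k - e :=
    (hf.isLittleO).comp_tendsto htend
  have hbo : (fun k => ek k - e) =O[atTop] hk := by
    refine Asymptotics.IsBigO.of_bound 1 (Filter.Eventually.of_forall fun k => ?_)
    simpa [Real.norm_of_nonneg (hpos k).le] using hle k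
  have hlo2 : (fun k => f (ek k) - f e - T (ek k - e)) =o[atTop] hk := hlo.trans_isBigO hbo
  rw [NormedAddCommGroup.tendsto_nhds_zero]
  intro ε hε
  filter_upwards [hlo2.def (half_pos hε)] with k hb
  have hkpos := hpos k
  have : ‖(hk k)⁻¹ • (f (ek k) - f e - T (ek k - e))‖
      = (hk k)⁻¹ * ‖f (ek k) - f e - T (ek k - e)‖ := by
    rw [norm_smul, Real.norm_of_nonneg (inv_nonneg.2 hkpos.le)]
  rw [this]
  have hb' : ‖f (ek k) - f e - T (ek k - e)‖ ≤ ε / 2 * hk k := by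
    simpa [Real.norm_of_nonneg hkpos.le] using hb
  calc (hk k)⁻¹ * ‖f (ek k) - f e - T (ek k - e)‖
      ≤ (hk k)⁻¹ * (ε / 2 * hk k) := by
        exact mul_le_mul_of_nonneg_left hb' (inv_nonneg.2 hkpos.le)
    _ = ε / 2 := by field_simp
    _ < ε := half_lt_self hε

lemma aux_closed_image
    (hrefl : Function.Surjective (NormedSpace.inclusionInDoubleDual ℝ V))
    (T : V →L[ℝ] X)
    {C : Set V} (hC : IsClosed C) (hconv : Convex ℝ C) (hbdd : C ⊆ closedBall 0 1) :
    IsClosed (T '' C) := by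
  haveI : T2Space (WeakSpace ℝ X) :=
    (WeakBilin.isEmbedding (B := (topDualPairing ℝ X).flip) aux_pair_inj).t2Space
  have hcomp : IsCompact (toWeakSpace ℝ V '' C) := aux_weak_compact hrefl hC hconv hbdd
  have heq : toWeakSpace ℝ X '' (T '' C) = (WeakSpace.map T) '' (toWeakSpace ℝ V '' C) := by
    rw [Set.image_image, Set.image_image]
    rfl
  have hcomp2 : IsCompact (toWeakSpace ℝ X '' (T '' C)) := by
    rw [heq]
    exact hcomp.image (WeakSpace.map T).continuous
  have hclw : IsClosed (toWeakSpace ℝ X '' (T '' C)) := hcomp2.isClosed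
  have heq2 : T '' C = toWeakSpaceCLM ℝ X ⁻¹' (toWeakSpace ℝ X '' (T '' C)) := by
    rw [show (⇑(toWeakSpaceCLM ℝ X) : X → WeakSpace ℝ X) = ⇑(toWeakSpace ℝ X) from rfl]
    exact (Set.preimage_image_eq _ (toWeakSpace ℝ X).injective).symm
  rw [heq2]
  exact hclw.preimage (toWeakSpaceCLM ℝ X).continuous

lemma aux_K_convex (D : Set V) (hDconv : Convex ℝ D) (e : V) (he : e ∈ D) :
    Convex ℝ {w : V | ∃ α : ℝ, 0 ≤ α ∧ ∃ y ∈ D, w = α • (y - e)} := by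
  rintro w₁ ⟨α₁, hα₁, y₁, hy₁, rfl⟩ w₂ ⟨α₂, hα₂, y₂, hy₂, rfl⟩ a b ha hb hab
  by_cases hs : a * α₁ + b * α₂ = 0
  · have h1 : a * α₁ = 0 := by nlinarith [mul_nonneg ha hα₁, mul_nonneg hb hα₂]
    have h2 : b * α₂ = 0 := by nlinarith [mul_nonneg ha hα₁, mul_nonneg hb hα₂]
    refine ⟨0, le_refl 0, e, he, ?_⟩
    rw [smul_smul, smul_smul, h1, h2]
    simp
  · have hspos : 0 < a * α₁ + b * α₂ :=
      lt_of_le_of_ne (by positivity) (Ne.symm hs)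
    refine ⟨a * α₁ + b * α₂, hspos.le,
      (a * α₁ / (a * α₁ + b * α₂)) • y₁ + (b * α₂ / (a * α₁ + b * α₂)) • y₂, ?_, ?_⟩
    · exact hDconv hy₁ hy₂ (by positivity) (by positivity) (by field_simp)
    · match_scalars <;> field_simp <;> ring

theorem stmt_12' {V X : Type*}
    [NormedAddCommGroup V] [NormedSpace ℝ V] [CompleteSpace V]
    [NormedAddCommGroup X] [NormedSpace ℝ X] [CompleteSpace X]
    (hrefl : Function.Surjective (NormedSpace.inclusionInDoubleDual ℝ V))
    (D : Set V) (hDclosed : IsClosed D) (hDconv : Convex ℝ D)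
    (f : V → X) (f' : V → (V →L[ℝ] X))
    (hdiff : ∀ x ∈ D, HasFDerivAt f (f' x) x)
    (e : V) (he : e ∈ D) :
    {ξ : X | ∃ (hk : ℕ → ℝ) (ek : ℕ → V),
        (∀ k, 0 < hk k) ∧ Tendsto hk atTop (𝓝 0) ∧
        (∀ k, ek k ∈ D) ∧ (∀ k, ‖ek k - e‖ ≤ hk k) ∧
        Tendsto (fun k => (hk k)⁻¹ • (f (ek k) - f e)) atTop (𝓝 ξ)}
      = {ξ : X | ∃ v ∈ closure {w : V | ∃ α : ℝ, 0 ≤ α ∧ ∃ y ∈ D, w = α • (y - e)},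
          ‖v‖ ≤ 1 ∧ ξ = f' e v} := by
  set T := f' e with hT
  set K := {w : V | ∃ α : ℝ, 0 ≤ α ∧ ∃ y ∈ D, w = α • (y - e)} with hKdef
  apply Set.Subset.antisymm
  · rintro ξ ⟨hk, ek, hpos, h0, hmem, hle, hlim⟩
    set C : Set V := closure K ∩ closedBall 0 1 with hCdef
    have hCclosed : IsClosed C := isClosed_closure.inter Metric.isClosed_closedBall
    have hCconv : Convex ℝ C :=
      ((aux_K_convex D hDconv e he).closure).inter (convex_closedBall 0 1)
    have hCbdd : C ⊆ closedBall 0 1 := Set.inter_subset_right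
    have hclosed : IsClosed (T '' C) := aux_closed_image hrefl T hCclosed hCconv hCbdd
    set vk : ℕ → V := fun k => (hk k)⁻¹ • (ek k - e) with hvk
    have hvkC : ∀ k, vk k ∈ C := by
      intro k
      constructor
      · exact subset_closure ⟨(hk k)⁻¹, inv_nonneg.2 (hpos k).le, ek k, hmem k, rfl⟩
      · simp only [mem_closedBall, dist_zero_right, hvk, norm_smul,
          Real.norm_of_nonneg (inv_nonneg.2 (hpos k).le)]
        calc (hk k)⁻¹ * ‖ek k - e‖ ≤ (hk k)⁻¹ * hk k := by
              exact mul_le_mul_of_nonneg_left (hle k) (inv_nonneg.2 (hpos k).le)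
          _ = 1 := inv_mul_cancel₀ (hpos k).ne'
    have hdd := aux_deriv (hdiff e he) hpos h0 hle
    have heq : ∀ k, T (vk k) = (hk k)⁻¹ • (f (ek k) - f e)
        - (hk k)⁻¹ • (f (ek k) - f e - T (ek k - e)) := by
      intro k
      simp only [hvk]
      rw [map_smul, ← smul_sub]
      congr 1
      abel
    have hTvk : Tendsto (fun k => T (vk k)) atTop (𝓝 ξ) := by
      simp only [heq]
      simpa using hlim.sub hdd
    have hmemTC : ξ ∈ T '' C :=
      hclosed.mem_of_tendsto hTvk (Filter.Eventually.of_forall fun k => ⟨vk k, hvkC k, rfl⟩)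
    obtain ⟨v, hvC, hTv⟩ := hmemTC
    exact ⟨v, hvC.1, by simpa [mem_closedBall, dist_zero_right] using hvC.2, hTv.symm⟩
  · rintro ξ ⟨v, hv, hv1, rfl⟩
    have hch : ∀ k : ℕ, ∃ w ∈ K, dist v w < 1 / (k + 1 : ℝ) := fun k =>
      Metric.mem_closure_iff.1 hv _ (by positivity)
    choose w hwK hwd using hch
    choose α hα y hy hwy using hwK
    have hα1 : ∀ k, (0:ℝ) < α k + 1 := fun k => by have := hα k; linarith
    set t : ℕ → ℝ := fun k => (1 / (k + 1 : ℝ)) * (1 / (α k + 1)) with htdef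
    have ht : ∀ k, 0 < t k := fun k => by
      have := hα1 k; positivity
    have htα : ∀ k, t k * α k ≤ 1 := by
      intro k
      have h1 : (1 : ℝ) / (k + 1 : ℝ) ≤ 1 := by
        rw [div_le_one (by positivity)]
        have hknn : (0:ℝ) ≤ (k:ℝ) := Nat.cast_nonneg k
        linarith
      have h2 : (1 / (α k + 1)) * α k ≤ 1 := by
        rw [div_mul_eq_mul_div, div_le_one (hα1 k)]; linarith
      calc t k * α k = (1 / (k + 1 : ℝ)) * ((1 / (α k + 1)) * α k) := by ring
        _ ≤ 1 * 1 := by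
            exact mul_le_mul h1 h2 (mul_nonneg (one_div_nonneg.2 (hα1 k).le) (hα k)) (by norm_num)
        _ = 1 := by norm_num
    set ek : ℕ → V := fun k => e + t k • w k with hekdef
    have hekD : ∀ k, ek k ∈ D := by
      intro k
      have hrep : ek k = (1 - t k * α k) • e + (t k * α k) • y k := by
        simp only [hekdef, hwy k]
        match_scalars <;> ring
      rw [hrep]
      exact hDconv he (hy k) (by linarith [htα k]) (mul_nonneg (ht k).le (hα k)) (by ring)
    set hk : ℕ → ℝ := fun k => t k * max ‖w k‖ 1 with hhkdef
    have hkpos : ∀ k, 0 < hk k := fun k =>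
      mul_pos (ht k) (lt_of_lt_of_le one_pos (le_max_right _ _))
    have hwb : ∀ k, ‖w k‖ ≤ 2 := by
      intro k
      have h1 : ‖w k‖ ≤ ‖v‖ + dist v (w k) := by
        rw [dist_eq_norm]
        calc ‖w k‖ = ‖v - (v - w k)‖ := by congr 1; abel
          _ ≤ ‖v‖ + ‖v - w k‖ := norm_sub_le _ _
      have h2 : dist v (w k) ≤ 1 := by
        refine (hwd k).le.trans ?_
        rw [div_le_one (by positivity)]
        have hknn : (0:ℝ) ≤ (k:ℝ) := Nat.cast_nonneg k
        linarith
      linarith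
    have htlim : Tendsto t atTop (𝓝 0) := by
      apply squeeze_zero (fun k => (ht k).le) (g := fun k : ℕ => 1 / (k + 1 : ℝ))
      · intro k
        calc t k ≤ (1 / (k + 1 : ℝ)) * 1 := by
              apply mul_le_mul_of_nonneg_left _ (by positivity)
              rw [div_le_one (hα1 k)]; linarith [hα k]
          _ = 1 / (k + 1 : ℝ) := by ring
      · exact tendsto_one_div_add_atTop_nhds_zero_nat
    have hk0 : Tendsto hk atTop (𝓝 0) := by
      apply squeeze_zero (fun k => (hkpos k).le) (g := fun k : ℕ => 2 * t k)
      · intro k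
        calc hk k = t k * max ‖w k‖ 1 := rfl
          _ ≤ t k * 2 := by
              apply mul_le_mul_of_nonneg_left _ (ht k).le
              exact max_le (hwb k) one_le_two
          _ = 2 * t k := by ring
      · have h2t := htlim.const_mul 2
        rw [mul_zero] at h2t
        exact h2t
    have hle : ∀ k, ‖ek k - e‖ ≤ hk k := by
      intro k
      have : ek k - e = t k • w k := by simp [hekdef]
      rw [this, norm_smul, Real.norm_of_nonneg (ht k).le]
      exact mul_le_mul_of_nonneg_left (le_max_left _ _) (ht k).le
    have hwlim : Tendsto w atTop (𝓝 v) := by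
      rw [tendsto_iff_dist_tendsto_zero]
      apply squeeze_zero (fun k => dist_nonneg) (g := fun k : ℕ => 1 / (k + 1 : ℝ))
      · intro k; rw [dist_comm]; exact (hwd k).le
      · exact tendsto_one_div_add_atTop_nhds_zero_nat
    have hmaxlim : Tendsto (fun k => max ‖w k‖ 1) atTop (𝓝 1) := by
      have h1 : Tendsto (fun k => ‖w k‖) atTop (𝓝 ‖v‖) := (continuous_norm.tendsto v).comp hwlim
      have h2 : Tendsto (fun k => max ‖w k‖ 1) atTop (𝓝 (max ‖v‖ 1)) :=
        h1.max tendsto_const_nhds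
      rwa [max_eq_right hv1] at h2
    refine ⟨hk, ek, hkpos, hk0, hekD, hle, ?_⟩
    have hdd := aux_deriv (hdiff e he) hkpos hk0 hle
    have heq : ∀ k, (hk k)⁻¹ • (f (ek k) - f e)
        = (max ‖w k‖ 1)⁻¹ • T (w k) + (hk k)⁻¹ • (f (ek k) - f e - T (ek k - e)) := by
      intro k
      have h1 : (hk k)⁻¹ • T (ek k - e) = (max ‖w k‖ 1)⁻¹ • T (w k) := by
        have hsub : ek k - e = t k • w k := by simp [hekdef]
        have hsc : (hk k)⁻¹ * t k = (max ‖w k‖ 1)⁻¹ := by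
          show (t k * max ‖w k‖ 1)⁻¹ * t k = (max ‖w k‖ 1)⁻¹
          rw [mul_inv, mul_comm ((t k)⁻¹), mul_assoc, inv_mul_cancel₀ (ht k).ne', mul_one]
        rw [hsub, map_smul, smul_smul, hsc]
      rw [← h1, ← smul_add]
      congr 1
      abel
    simp only [heq]
    have hfirst : Tendsto (fun k => (max ‖w k‖ 1)⁻¹ • T (w k)) atTop (𝓝 (T v)) := by
      have h1 : Tendsto (fun k => (max ‖w k‖ 1)⁻¹) atTop (𝓝 1⁻¹) :=
        hmaxlim.inv₀ one_ne_zero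
      have h2 : Tendsto (fun k => T (w k)) atTop (𝓝 (T v)) :=
        (T.continuous.tendsto v).comp hwlim
      simpa using h1.smul h2
    simpa using hfirst.add hdd

end AuxStmt12

/-- Let `V` be a reflexive Banach space, `X` Banach, `D ⊆ V` closed convex and
`f` Fréchet differentiable at each point of `D`. Then the set of variations of `f` at
`e ∈ D` equals `{f'(e)v : v ∈ I_D(e), ‖v‖ ≤ 1}`; in particular, if `e ∈ int D` then it
equals `{f'(e)v : ‖v‖ ≤ 1}`. -/
theorem stmt_12 {V X : Type*}
    [NormedAddCommGroup V] [NormedSpace ℝ V] [CompleteSpace V]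
    [NormedAddCommGroup X] [NormedSpace ℝ X] [CompleteSpace X]
    (hrefl : Function.Surjective (NormedSpace.inclusionInDoubleDual ℝ V))
    (D : Set V) (hDclosed : IsClosed D) (hDconv : Convex ℝ D)
    (f : V → X) (f' : V → (V →L[ℝ] X))
    (hdiff : ∀ x ∈ D, HasFDerivAt f (f' x) x)
    (e : V) (he : e ∈ D) :
    {ξ : X | ∃ (hk : ℕ → ℝ) (ek : ℕ → V),
        (∀ k, 0 < hk k) ∧ Tendsto hk atTop (𝓝 0) ∧
        (∀ k, ek k ∈ D) ∧ (∀ k, ‖ek k - e‖ ≤ hk k) ∧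
        Tendsto (fun k => (hk k)⁻¹ • (f (ek k) - f e)) atTop (𝓝 ξ)}
      = {ξ : X | ∃ v ∈ closure {w : V | ∃ α : ℝ, 0 ≤ α ∧ ∃ y ∈ D, w = α • (y - e)},
          ‖v‖ ≤ 1 ∧ ξ = f' e v} ∧
    (e ∈ interior D →
      {ξ : X | ∃ (hk : ℕ → ℝ) (ek : ℕ → V),
          (∀ k, 0 < hk k) ∧ Tendsto hk atTop (𝓝 0) ∧
          (∀ k, ek k ∈ D) ∧ (∀ k, ‖ek k - e‖ ≤ hk k) ∧
          Tendsto (fun k => (hk k)⁻¹ • (f (ek k) - f e)) atTop (𝓝 ξ)}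
        = f' e '' Metric.closedBall 0 1) := by
  have hmain := stmt_12' hrefl D hDclosed hDconv f f' hdiff e he
  refine ⟨hmain, fun hint => ?_⟩
  rw [hmain]
  have hKuniv : {w : V | ∃ α : ℝ, 0 ≤ α ∧ ∃ y ∈ D, w = α • (y - e)} = Set.univ := by
    obtain ⟨ε, hε, hball⟩ := Metric.isOpen_iff.1 isOpen_interior e hint
    ext wv
    simp only [Set.mem_setOf_eq, Set.mem_univ, iff_true]
    by_cases hw0 : wv = 0
    · exact ⟨0, le_rfl, e, he, by simp [hw0]⟩
    · have hn : 0 < ‖wv‖ := norm_pos_iff.2 hw0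
      refine ⟨2 * ‖wv‖ / ε, by positivity, e + (ε / (2 * ‖wv‖)) • wv,
        interior_subset (hball ?_), ?_⟩
      · rw [Metric.mem_ball, dist_eq_norm, add_sub_cancel_left, norm_smul,
          Real.norm_of_nonneg (by positivity)]
        have hεeq : ε / (2 * ‖wv‖) * ‖wv‖ = ε / 2 := by field_simp
        rw [hεeq]; linarith
      · have hone : (2 * ‖wv‖ / ε) * (ε / (2 * ‖wv‖)) = 1 := by field_simp
        rw [add_sub_cancel_left, smul_smul, hone, one_smul]
  rw [hKuniv, closure_univ]
  ext ξ
  constructor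
  · rintro ⟨v, -, hv1, rfl⟩
    exact ⟨v, by simpa [Metric.mem_closedBall, dist_zero_right] using hv1, rfl⟩
  · rintro ⟨v, hvb, rfl⟩
    exact ⟨v, trivial, by simpa [Metric.mem_closedBall, dist_zero_right] using hvb, rfl⟩
end

section
/- Let X = ℓ² and define f : ℓ² → ℓ² by f(u) = (u₂ + (u₁−1)³, −u₂ + (u₁−1)³, 0, u₄, u₅, ...) and f₀(u) = u₁. Then for any u₃ ∈ ℝ, the point ū = (1, 0, u₃, 0, 0, ...) minimizes f₀ over {u ∈ ℓ² : f(u) = 0}, and there is no z ∈ ℓ² satisfying the KKT condition f₀'(ū) + f'(ū)* z = 0; however, the Fritz John condition z₀ f₀'(ū) + f'(ū)* z = 0 holds with z₀ = 0 and z = (α, α, β, 0, 0, ...) for any α ≠ 0. -/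
noncomputable section

open scoped ENNReal

/-- The ambient space `ℓ²` of square-summable real sequences. -/
abbrev H16 : Type := lp (fun _ : ℕ => ℝ) 2

/-- The `i`-th coordinate of an element of `ℓ²`. -/
def co (u : H16) (i : ℕ) : ℝ := u i

/-- The constraint map `f(u) = (u₂ + (u₁-1)³, -u₂ + (u₁-1)³, 0, u₄, u₅, ...)`
(coordinates indexed from `0`). -/
noncomputable def f16 (u : H16) : H16 :=
  u + (lp.single 2 0 (co u 1 + (co u 0 - 1) ^ 3 - co u 0) : H16)
    + (lp.single 2 1 (-(co u 1) + (co u 0 - 1) ^ 3 - co u 1) : H16)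
    + (lp.single 2 2 (-(co u 2)) : H16)

/-- The (formal) derivative `f'(ū) : v ↦ (v₂, -v₂, 0, v₄, v₅, ...)`. -/
noncomputable def A16 (v : H16) : H16 :=
  v + (lp.single 2 0 (co v 1 - co v 0) : H16) + (lp.single 2 1 (-(co v 1) - co v 1) : H16) + (lp.single 2 2 (-(co v 2)) : H16)


lemma co_add16 (u v : H16) (i : ℕ) : co (u + v) i = co u i + co v i := rfl
lemma co_single16 (i j : ℕ) (a : ℝ) : co (lp.single 2 i a : H16) j = if j = i then a else 0 := by
  rw [co, lp.single_apply]
  split_ifs with h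
  · subst h; simp
  · simp [Pi.single_apply, h]
lemma co_zero16 (i : ℕ) : co (0 : H16) i = 0 := rfl
lemma co_neg16 (u : H16) (i : ℕ) : co (-u) i = -(co u i) := rfl
lemma co_sub16 (u v : H16) (i : ℕ) : co (u - v) i = co u i - co v i := rfl

lemma ext16 {u v : H16} (h : ∀ i, co u i = co v i) : u = v :=
  lp.ext (funext h)

lemma co_f16 (u : H16) (j : ℕ) : co (f16 u) j =
    co u j + (if j = 0 then co u 1 + (co u 0 - 1) ^ 3 - co u 0 else 0)
      + (if j = 1 then -(co u 1) + (co u 0 - 1) ^ 3 - co u 1 else 0)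
      + (if j = 2 then -(co u 2) else 0) := by
  simp [f16, co_add16, co_single16, co_neg16, co_sub16]; split_ifs <;> ring

lemma co_A16 (v : H16) (j : ℕ) : co (A16 v) j =
    co v j + (if j = 0 then co v 1 - co v 0 else 0)
      + (if j = 1 then -(co v 1) - co v 1 else 0)
      + (if j = 2 then -(co v 2) else 0) := by
  simp [A16, co_add16, co_single16, co_neg16, co_sub16]; split_ifs <;> ring

/-- for any `u₃`, the point `ū = (1, 0, u₃, 0, ...)` minimizes `f₀(u) = u₁`
over `{u : f(u) = 0}`; there is no `z` satisfying the KKT condition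
`f₀'(ū) + f'(ū)* z = 0` (i.e. `∀ v, v₁ + ⟪f'(ū) v, z⟫ = 0`); but the Fritz John condition
holds with `z₀ = 0` and `z = (α, α, β, 0, ...)` for any `α ≠ 0`. -/
theorem stmt_16 (c : ℝ) :
    (f16 (lp.single 2 0 1 + lp.single 2 2 c) = 0 ∧
      ∀ u : H16, f16 u = 0 →
        co (lp.single 2 0 (1:ℝ) + lp.single 2 2 c) 0 ≤ co u 0) ∧
    (¬ ∃ z : H16, ∀ v : H16, co v 0 + (inner ℝ (A16 v) z : ℝ) = 0) ∧
    (∀ (α β : ℝ), α ≠ 0 →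
      ∀ v : H16,
        (0 : ℝ) * co v 0 +
          (inner ℝ (A16 v)
            (lp.single 2 0 α + lp.single 2 1 α + lp.single 2 2 β : H16) : ℝ) = 0) := by
  refine ⟨⟨?_, ?_⟩, ?_, ?_⟩
  · apply ext16
    intro j
    rw [co_f16, co_zero16]
    rcases j with _|_|_|j <;> norm_num [co_add16, co_single16] <;> split_ifs <;> ring
  · intro u hu
    have h0 := congrArg (fun x => co x 0) hu
    have h1 := congrArg (fun x => co x 1) hu
    simp only [co_f16, co_zero16] at h0 h1
    norm_num at h0 h1
    have ht : (co u 0 - 1) ^ 3 = 0 := by linarith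
    have : co u 0 - 1 = 0 := by
      exact pow_eq_zero_iff (by norm_num) |>.mp ht
    simp only [co_add16, co_single16]
    norm_num
    linarith
  · rintro ⟨z, hz⟩
    have h := hz (lp.single 2 0 1)
    have hA : A16 (lp.single 2 0 1 : H16) = 0 := by
      apply ext16
      intro j
      rw [co_A16, co_zero16]
      rcases j with _|_|_|j <;> norm_num [co_single16]
    rw [hA, co_single16] at h
    simp at h
  · intro α β hα v
    rw [inner_add_right, inner_add_right, lp.inner_single_right, lp.inner_single_right,
      lp.inner_single_right]
    have h0 : (A16 v) 0 = co v 1 := by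
      have := co_A16 v 0; simp [co] at this ⊢; linarith
    have h1 : (A16 v) 1 = -(co v 1) := by
      have := co_A16 v 1; simp [co] at this ⊢; linarith
    have h2 : (A16 v) 2 = 0 := by
      have := co_A16 v 2; simp [co] at this ⊢; linarith
    rw [h0, h1, h2]
    simp [RCLike.inner_apply]


end
end
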